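/- arXiv:2112.09799 — 3 statements merged into one kernel-verified Lean document; each statement's English description precedes it below -/
import Mathlib

section
/- The number of semi-standard Young tableaux of shape μ (a partition of n) with entries in {1, 2, ..., k} equals ∏_{(i,j)∈μ} (k + i - j)/h(i,j), where h(i,j) is the hook length of the cell and i is the column index, j the row index (Cartesian convention, cell contributes k + (column shift)). -/
open Finset

/-- The cells of the Ferrers diagram of a partition `μ` of `n`: cell `(i, j)` (column
index `i`, row index `j`, Cartesian convention) belongs to the diagram iff `i < μ j`. -/
def cellsOf (n : ℕ) (μ : Fin n → ℕ) : Finset (Fin n × Fin n) :=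
  Finset.univ.filter fun c => (c.1 : ℕ) < μ c.2

/-- The hook length of a cell: arm + leg + 1. -/
def hookLen (n : ℕ) (μ : Fin n → ℕ) (c : Fin n × Fin n) : ℕ :=
  ((cellsOf n μ).filter fun d => d.2 = c.2 ∧ c.1 < d.1).card
    + ((cellsOf n μ).filter fun d => d.1 = c.1 ∧ c.2 < d.2).card + 1

/-- The number of semi-standard Young tableaux of shape `μ` with entries in
`{1, …, k}`: fillings weakly increasing along rows and strictly increasing up
columns. -/
noncomputable def ssytCount (n k : ℕ) (μ : Fin n → ℕ) : ℕ :=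
  Nat.card {T : {c : Fin n × Fin n // c ∈ cellsOf n μ} → ℕ //
    (∀ c d : {c : Fin n × Fin n // c ∈ cellsOf n μ},
        c.1.2 = d.1.2 → c.1.1 ≤ d.1.1 → T c ≤ T d) ∧
    (∀ c d : {c : Fin n × Fin n // c ∈ cellsOf n μ},
        c.1.1 = d.1.1 → c.1.2 < d.1.2 → T c < T d) ∧
    (∀ c, 1 ≤ T c ∧ T c ≤ k)}


noncomputable section
namespace HookAux
open Polynomial


def ff (j : ℕ) (x : ℚ) : ℚ := (descPochhammer ℚ j).eval x

lemma ff_zero (x : ℚ) : ff 0 x = 1 := by simp [ff, descPochhammer]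

lemma ff_succ_right (j : ℕ) (x : ℚ) : ff (j+1) x = ff j x * (x - j) := by
  simp [ff, descPochhammer_succ_eval]

lemma ff_succ_left (j : ℕ) (x : ℚ) : ff (j+1) x = x * ff j (x - 1) := by
  simp [ff, descPochhammer_succ_left]

lemma ff_diff (j : ℕ) (x : ℚ) : ff (j+1) (x+1) - ff (j+1) x = (j+1) * ff j x := by
  rw [ff_succ_left, ff_succ_right]; ring_nf

lemma sum_ff (j : ℕ) (y : ℚ) (m : ℕ) :
    ∑ x ∈ range m, ff j (y + x) = (ff (j+1) (y + m) - ff (j+1) y) / (j+1) := by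
  induction m with
  | zero => simp
  | succ m ih =>
      rw [Finset.sum_range_succ, ih]
      have h := ff_diff j (y + m)
      have hj : (j:ℚ)+1 ≠ 0 := by positivity
      field_simp
      push_cast [Nat.cast_succ]
      ring_nf
      ring_nf at h ⊢
      linarith [h]

/-- Vandermonde product, Mathlib orientation. -/
def D {m : ℕ} (x : Fin m → ℚ) : ℚ := ∏ i, ∏ j ∈ Ioi i, (x j - x i)

def dcoef (k : ℕ) : Fin (k+1) → ℚ := fun j => if (j:ℕ) = 0 then 1 else 1/(j:ℚ)

lemma vand_ff {m : ℕ} (x : Fin m → ℚ) :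
    (Matrix.of fun i j : Fin m => ff (j:ℕ) (x i)).det = D x := by
  simp only [ff]
  rw [← Matrix.det_eval_matrixOfPolynomials_eq_det_vandermonde x
      (fun j => descPochhammer ℚ (j:ℕ)) (fun i => descPochhammer_natDegree ℚ _)
      (fun i => monic_descPochhammer _ _), Matrix.det_vandermonde]
  rfl

lemma prod_dcoef (k : ℕ) : ∏ j, dcoef k j = ((Nat.factorial k) : ℚ)⁻¹ := by
  rw [Fin.prod_univ_succ]
  have h0 : dcoef k 0 = 1 := by simp [dcoef]
  have h1 : ∀ j : Fin k, dcoef k j.succ = ((j:ℚ)+1)⁻¹ := by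
    intro j; simp [dcoef, Fin.val_succ]
  rw [h0, one_mul]
  simp only [h1]
  rw [Finset.prod_inv_distrib]
  congr 1
  rw [Fin.prod_univ_eq_prod_range (fun j => ((j:ℚ)+1)), ← Finset.prod_range_add_one_eq_factorial k]
  push_cast
  rfl

lemma det_N (k : ℕ) (x : Fin (k+1) → ℚ) :
    (Matrix.of fun (i j : Fin (k+1)) => ff (j:ℕ) (x i) * dcoef k j).det = D x / (Nat.factorial k) := by
  have h : (Matrix.of fun (i j : Fin (k+1)) => ff (j:ℕ) (x i) * dcoef k j)
      = (Matrix.of fun i j : Fin (k+1) => ff (j:ℕ) (x i)) * Matrix.diagonal (dcoef k) := by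
    ext i j; rw [Matrix.mul_diagonal]; rfl
  rw [h, Matrix.det_mul, Matrix.det_diagonal, vand_ff, prod_dcoef, div_eq_mul_inv]

lemma det_M (k : ℕ) (Y : Fin (k+1) → ℚ) :
    (Matrix.of fun (r j : Fin k) =>
        (ff ((j:ℕ)+1) (Y r.succ) - ff ((j:ℕ)+1) (Y r.castSucc)) / ((j:ℚ)+1)).det
      = D Y / (Nat.factorial k) := by
  set N : Matrix (Fin (k+1)) (Fin (k+1)) ℚ :=
    Matrix.of (fun i j => ff (j:ℕ) (Y i) * dcoef k j) with hN
  set B : Matrix (Fin (k+1)) (Fin (k+1)) ℚ :=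
    Matrix.of (fun i j => Fin.cases (N 0 j) (fun r => N r.succ j - N r.castSucc j) i) with hB
  have hdet : N.det = B.det := by
    apply Matrix.det_eq_of_forall_row_eq_smul_add_pred (c := fun _ => 1)
    · intro j; simp [hB]
    · intro i j
      simp only [hB, Matrix.of_apply, Fin.cases_succ, one_mul]
      ring
  have hcol : ∀ i : Fin (k+1), B i 0 = if i = 0 then 1 else 0 := by
    intro i
    induction i using Fin.cases with
    | zero => simp [hB, hN, ff_zero, dcoef]
    | succ r => simp [hB, hN, ff_zero, dcoef, Fin.succ_ne_zero]
  have hexp := Matrix.det_succ_column_zero B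
  rw [Fin.sum_univ_succ] at hexp
  have hz : ∀ r : Fin k,
      (-1 : ℚ) ^ ((r.succ : Fin (k+1)) : ℕ) * B r.succ 0
        * (B.submatrix r.succ.succAbove Fin.succ).det = 0 := by
    intro r; rw [hcol]; simp [Fin.succ_ne_zero]
  rw [Finset.sum_eq_zero (fun r _ => hz r), add_zero, hcol] at hexp
  simp only [if_pos rfl, Fin.val_zero, pow_zero, one_mul, Fin.succAbove_zero] at hexp
  have hsub : (B.submatrix Fin.succ Fin.succ) =
      Matrix.of fun (r j : Fin k) =>
        (ff ((j:ℕ)+1) (Y r.succ) - ff ((j:ℕ)+1) (Y r.castSucc)) / ((j:ℚ)+1) := by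
    ext r j
    simp only [Matrix.submatrix_apply, hB, Matrix.of_apply, Fin.cases_succ, hN]
    have hd : dcoef k j.succ = ((j:ℚ)+1)⁻¹ := by simp [dcoef, Fin.val_succ]
    rw [hd]
    simp [Fin.val_succ]
    ring
  simp only [if_true, one_mul] at hexp
  rw [← hsub, ← hexp, ← hdet, ← det_N k Y]




def Yv (k : ℕ) (μ : ℕ → ℕ) : Fin k → ℕ := fun r => μ (k - 1 - (r:ℕ)) + r
def sf (k : ℕ) : ℕ := ∏ m ∈ range k, Nat.factorial m
def Wq (k : ℕ) (μ : ℕ → ℕ) : ℚ := D (fun r => (Yv k μ r : ℚ)) / sf k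
def extd (k : ℕ) (v : Fin k → ℕ) : ℕ → ℕ := fun j => if h : j < k then v ⟨j, h⟩ else 0
def box (k : ℕ) (μ : ℕ → ℕ) : Finset (Fin k → ℕ) :=
  Fintype.piFinset (fun i => Icc (μ ((i:ℕ)+1)) (μ (i:ℕ)))

lemma Yv_extd (k : ℕ) (v : Fin k → ℕ) (r : Fin k) :
    Yv k (extd k v) r = v (Fin.rev r) + (r:ℕ) := by
  have h : k - 1 - (r:ℕ) < k := by omega
  have he : (⟨k - 1 - (r:ℕ), h⟩ : Fin k) = Fin.rev r := by
    apply Fin.ext; simp only [Fin.val_rev]; omega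
  simp only [Yv, extd, dif_pos h, he]

lemma sum_D (k : ℕ) (μ : ℕ → ℕ) (hμ : ∀ a b : ℕ, a ≤ b → μ b ≤ μ a) :
    ∑ v ∈ box k μ, D (fun r : Fin k => (Yv k (extd k v) r : ℚ))
      = D (fun r => (Yv (k+1) μ r : ℚ)) / (Nat.factorial k) := by
  have step1 : ∑ v ∈ box k μ, D (fun r : Fin k => (Yv k (extd k v) r : ℚ))
      = ∑ w ∈ Fintype.piFinset (fun r : Fin k => Icc (μ (k - (r:ℕ))) (μ (k - 1 - (r:ℕ)))),
          D (fun r : Fin k => (w r : ℚ) + r) := by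
    apply Finset.sum_nbij' (i := fun v => v ∘ Fin.rev) (j := fun w => w ∘ Fin.rev)
    · intro v hv
      simp only [box, Fintype.mem_piFinset] at hv ⊢
      intro r
      have h1 := hv (Fin.rev r)
      rw [Fin.val_rev] at h1
      have e1 : k - 1 - (r:ℕ) = k - ((r:ℕ)+1) := by omega
      have e2 : k - (r:ℕ) = k - ((r:ℕ)+1) + 1 := by omega
      rw [e1, e2]
      simpa using h1
    · intro w hw
      simp only [box, Fintype.mem_piFinset] at hw ⊢
      intro r
      have h1 := hw (Fin.rev r)
      rw [Fin.val_rev] at h1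
      have e1 : k - ((k - ((r:ℕ)+1))) = (r:ℕ) + 1 := by omega
      have e2 : k - 1 - ((k - ((r:ℕ)+1))) = (r:ℕ) := by omega
      rw [e1, e2] at h1
      simpa using h1
    · intro v _; funext r; simp [Function.comp, Fin.rev_rev]
    · intro w _; funext r; simp [Function.comp, Fin.rev_rev]
    · intro v _
      congr 1; funext r; rw [Yv_extd]; simp [Function.comp]
  rw [step1]
  have step2 : (Matrix.detRowAlternating (R := ℚ) (n := Fin k)).toMultilinearMap
          (fun r => ∑ x ∈ (Icc (μ (k - (r:ℕ))) (μ (k - 1 - (r:ℕ))) : Finset ℕ),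
            (fun j : Fin k => ff (j:ℕ) ((x:ℚ) + r)))
      = ∑ w ∈ Fintype.piFinset (fun r : Fin k => Icc (μ (k - (r:ℕ))) (μ (k - 1 - (r:ℕ)))),
          D (fun r : Fin k => (w r : ℚ) + r) := by
    rw [(Matrix.detRowAlternating (R := ℚ) (n := Fin k)).toMultilinearMap.map_sum_finset
        (fun r (x : ℕ) => fun j : Fin k => ff (j:ℕ) ((x:ℚ) + r))
        (fun r => (Icc (μ (k - (r:ℕ))) (μ (k - 1 - (r:ℕ))) : Finset ℕ))]
    apply Finset.sum_congr rfl
    intro w _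
    rw [← vand_ff (fun r : Fin k => (w r : ℚ) + r)]
    rfl
  rw [← step2]
  have step3 : (fun r : Fin k => ∑ x ∈ (Icc (μ (k - (r:ℕ))) (μ (k - 1 - (r:ℕ))) : Finset ℕ),
        (fun j : Fin k => ff (j:ℕ) ((x:ℚ) + r)))
      = fun r => fun j : Fin k =>
          (ff ((j:ℕ)+1) ((Yv (k+1) μ r.succ : ℕ) : ℚ) - ff ((j:ℕ)+1) ((Yv (k+1) μ r.castSucc : ℕ) : ℚ))
            / ((j:ℚ)+1) := by
    funext r
    have hab : μ (k - (r:ℕ)) ≤ μ (k - 1 - (r:ℕ)) := hμ _ _ (by omega)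
    rw [show (Icc (μ (k - (r:ℕ))) (μ (k - 1 - (r:ℕ))) : Finset ℕ)
        = Ico (μ (k - (r:ℕ))) (μ (k - 1 - (r:ℕ)) + 1) by rw [Finset.Ico_add_one_right_eq_Icc]]
    rw [Finset.sum_Ico_eq_sum_range]
    funext j
    rw [Finset.sum_apply]
    set a := μ (k - (r:ℕ)) with ha
    set b := μ (k - 1 - (r:ℕ)) with hb
    have hcast : ∀ t ∈ range (b + 1 - a),
        (fun x : ℕ => fun j : Fin k => ff (j:ℕ) ((x:ℚ) + r)) (a + t) j
          = ff (j:ℕ) (((a:ℚ) + r) + t) := by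
      intro t _; push_cast; ring_nf
    rw [Finset.sum_congr rfl hcast, sum_ff]
    have h1 : ((a:ℚ) + r) + ((b + 1 - a : ℕ) : ℚ) = ((Yv (k+1) μ r.succ : ℕ) : ℚ) := by
      have : (Yv (k+1) μ r.succ : ℕ) = b + 1 + (r:ℕ) := by
        simp only [Yv, Fin.val_succ, hb]
        have : k + 1 - 1 - ((r:ℕ)+1) = k - 1 - (r:ℕ) := by omega
        rw [this]; ring
      rw [this, Nat.cast_sub (by omega)]
      push_cast; ring
    have h2 : ((a:ℚ) + r) = ((Yv (k+1) μ r.castSucc : ℕ) : ℚ) := by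
      have : (Yv (k+1) μ r.castSucc : ℕ) = a + (r:ℕ) := by
        simp only [Yv, Fin.coe_castSucc, ha]
        have : k + 1 - 1 - (r:ℕ) = k - (r:ℕ) := by omega
        rw [this]
      rw [this]; push_cast; ring
    rw [h1, h2]
  rw [step3]
  exact det_M k (fun r => (Yv (k+1) μ r : ℚ))

lemma Wq_rec (k : ℕ) (μ : ℕ → ℕ) (hμ : ∀ a b : ℕ, a ≤ b → μ b ≤ μ a) :
    ∑ v ∈ box k μ, Wq k (extd k v) = Wq (k+1) μ := by
  simp only [Wq]
  rw [← Finset.sum_div, sum_D k μ hμ]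
  rw [show sf (k+1) = sf k * Nat.factorial k from by rw [sf, sf, Finset.prod_range_succ]]
  push_cast
  field_simp


def Ajf (k : ℕ) (μ : ℕ → ℕ) (j : ℕ) : ℕ := μ j + (k - 1 - j)
def Lf (k : ℕ) (μ : ℕ → ℕ) (i j : ℕ) : ℕ := ((Ioo j k).filter fun j' => i < μ j').card
def hkf (k : ℕ) (μ : ℕ → ℕ) (i j : ℕ) : ℕ := μ j - i + Lf k μ i j

lemma prod_Icc_one_id (m : ℕ) : ∏ x ∈ Icc 1 m, x = Nat.factorial m := by
  rw [← Finset.Ico_add_one_right_eq_Icc, Finset.prod_Ico_eq_prod_range, Nat.add_sub_cancel,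
    ← Finset.prod_range_add_one_eq_factorial m]
  exact Finset.prod_congr rfl fun x _ => by omega

section
variable (k : ℕ) (μ : ℕ → ℕ) (hμ : ∀ a b : ℕ, a ≤ b → μ b ≤ μ a)

lemma Ajf_lt (hμ : ∀ a b : ℕ, a ≤ b → μ b ≤ μ a) {a b : ℕ} (hab : a < b) (hbk : b < k) :
    Ajf k μ b < Ajf k μ a := by
  have := hμ a b (le_of_lt hab)
  simp only [Ajf]; omega

lemma L_ge (hμ : ∀ a b : ℕ, a ≤ b → μ b ≤ μ a) {i j j' : ℕ} (h1 : j < j') (h2 : j' < k)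
    (h3 : i < μ j') : j' - j ≤ Lf k μ i j := by
  have hsub : Ioc j j' ⊆ (Ioo j k).filter fun t => i < μ t := by
    intro t ht
    rw [mem_Ioc] at ht
    rw [mem_filter, mem_Ioo]
    exact ⟨⟨ht.1, lt_of_le_of_lt ht.2 h2⟩, lt_of_lt_of_le h3 (hμ t j' ht.2)⟩
  have := Finset.card_le_card hsub
  rwa [Nat.card_Ioc] at this

lemma L_le (hμ : ∀ a b : ℕ, a ≤ b → μ b ≤ μ a) {i j j' : ℕ} (h1 : j < j')
    (h3 : μ j' ≤ i) : Lf k μ i j ≤ j' - j - 1 := by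
  have hsub : (Ioo j k).filter (fun t => i < μ t) ⊆ Ioo j j' := by
    intro t ht
    rw [mem_filter, mem_Ioo] at ht
    rw [mem_Ioo]
    refine ⟨ht.1.1, ?_⟩
    by_contra h
    push_neg at h
    exact absurd (lt_of_le_of_lt h3 ht.2) (not_lt.mpr (hμ j' t h))
  have := Finset.card_le_card hsub
  rwa [Nat.card_Ioo] at this

lemma hk_strict_anti (hμ : ∀ a b : ℕ, a ≤ b → μ b ≤ μ a) {j i1 i2 : ℕ} (h12 : i1 < i2)
    (h2 : i2 < μ j) : hkf k μ i2 j < hkf k μ i1 j := by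
  have hL : Lf k μ i2 j ≤ Lf k μ i1 j := by
    apply Finset.card_le_card
    intro t ht
    rw [mem_filter] at ht ⊢
    exact ⟨ht.1, lt_trans h12 ht.2⟩
  simp only [hkf, Lf] at hL ⊢; omega

lemma L_le_all {i j : ℕ} : Lf k μ i j ≤ k - 1 - j := by
  have := Finset.card_filter_le (Ioo j k) (fun j' => i < μ j')
  rw [Nat.card_Ioo] at this
  simp only [Lf]
  omega

lemma hook_row (hμ : ∀ a b : ℕ, a ≤ b → μ b ≤ μ a) {j : ℕ} (hj : j < k) :
    (∏ i ∈ range (μ j), hkf k μ i j) * (∏ j' ∈ Ioo j k, (Ajf k μ j - Ajf k μ j'))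
      = Nat.factorial (Ajf k μ j) := by
  set A := Ajf k μ j with hA
  set S1 := (range (μ j)).image (fun i => hkf k μ i j) with hS1
  set S2 := (Ioo j k).image (fun j' => A - Ajf k μ j') with hS2
  have inj1 : Set.InjOn (fun i => hkf k μ i j) (range (μ j)) := by
    intro a ha b hb hab
    simp only at hab
    rw [coe_range, Set.mem_Iio] at ha hb
    rcases Nat.lt_trichotomy a b with h | h | h
    · exact absurd hab (Nat.ne_of_gt (hk_strict_anti k μ hμ h hb))
    · exact h
    · exact absurd hab (Nat.ne_of_lt (hk_strict_anti k μ hμ h ha))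
  have inj2 : Set.InjOn (fun j' => A - Ajf k μ j') (Ioo j k) := by
    intro a ha b hb hab
    simp only at hab
    rw [coe_Ioo, Set.mem_Ioo] at ha hb
    have hA_a : Ajf k μ a < A := hA ▸ Ajf_lt k μ hμ ha.1 ha.2
    have hA_b : Ajf k μ b < A := hA ▸ Ajf_lt k μ hμ hb.1 hb.2
    rcases Nat.lt_trichotomy a b with h | h | h
    · have := Ajf_lt k μ hμ h hb.2; omega
    · exact h
    · have := Ajf_lt k μ hμ h ha.2; omega
  have hdisj : Disjoint S1 S2 := by
    rw [Finset.disjoint_left]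
    rintro x hx1 hx2
    rw [hS1, Finset.mem_image] at hx1
    rw [hS2, Finset.mem_image] at hx2
    obtain ⟨i, hi, hx1⟩ := hx1
    obtain ⟨j', hj', hx2⟩ := hx2
    have hx1' : hkf k μ i j = x := hx1
    have hx2' : A - Ajf k μ j' = x := hx2
    rw [mem_range] at hi
    rw [mem_Ioo] at hj'
    have hAj' : Ajf k μ j' < A := hA ▸ Ajf_lt k μ hμ hj'.1 hj'.2
    have heq : hkf k μ i j = μ j - μ j' + (j' - j) := by
      have e1 : A - Ajf k μ j' = μ j - μ j' + (j' - j) := by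
        have := hμ j j' (le_of_lt hj'.1)
        simp only [hA, Ajf]; omega
      rw [hx1', ← hx2', e1]
    rcases Nat.lt_or_ge i (μ j') with hlt | hge
    · have := L_ge k μ hμ hj'.1 hj'.2 hlt
      have := hμ j j' (le_of_lt hj'.1)
      simp only [hkf] at heq
      omega
    · have := L_le k μ hμ hj'.1 hge
      have := hμ j j' (le_of_lt hj'.1)
      simp only [hkf] at heq
      omega
  have hsub : S1 ∪ S2 ⊆ Icc 1 A := by
    intro x hx
    rw [Finset.mem_union] at hx
    rw [mem_Icc]
    rcases hx with hx | hx
    · rw [hS1, Finset.mem_image] at hx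
      obtain ⟨i, hi, hx⟩ := hx
      rw [mem_range] at hi
      have := L_le_all k μ (i := i) (j := j)
      simp only [hkf] at hx
      simp only [hA, Ajf]
      omega
    · rw [hS2, Finset.mem_image] at hx
      obtain ⟨j', hj', hx⟩ := hx
      rw [mem_Ioo] at hj'
      have := hA ▸ Ajf_lt k μ hμ hj'.1 hj'.2
      omega
  have hcards : S1.card + S2.card = A := by
    have c1 : S1.card = μ j := by
      rw [hS1, Finset.card_image_of_injOn inj1, Finset.card_range]
    have c2 : S2.card = k - 1 - j := by
      rw [hS2, Finset.card_image_of_injOn inj2, Nat.card_Ioo]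
      omega
    rw [c1, c2, hA]; simp only [Ajf]
  have hunion : S1 ∪ S2 = Icc 1 A := by
    apply Finset.eq_of_subset_of_card_le hsub
    rw [Nat.card_Icc, Finset.card_union_of_disjoint hdisj, hcards]
    omega
  calc (∏ i ∈ range (μ j), hkf k μ i j) * (∏ j' ∈ Ioo j k, (A - Ajf k μ j'))
      = (∏ x ∈ S1, x) * (∏ x ∈ S2, x) := by
        rw [hS1, hS2, Finset.prod_image inj1, Finset.prod_image inj2]
    _ = ∏ x ∈ S1 ∪ S2, x := (Finset.prod_union hdisj).symm
    _ = Nat.factorial A := by rw [hunion, prod_Icc_one_id]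

lemma content_row {j : ℕ} (hj : j < k) :
    (∏ i ∈ range (μ j), (k - j + i)) * Nat.factorial (k - 1 - j)
      = Nat.factorial (Ajf k μ j) := by
  simp only [Ajf]
  set c := k - 1 - j with hc
  have hkj : k - j = c + 1 := by omega
  rw [hkj]
  induction (μ j) with
  | zero => simp
  | succ m ih =>
      rw [Finset.prod_range_succ, show m + 1 + c = (m + c) + 1 by omega]
      rw [Nat.factorial_succ, ← ih]
      ring

end



def IsSSYT (μ : ℕ → ℕ) (k : ℕ) (T : ℕ → ℕ → ℕ) : Prop :=
  (∀ i1 i2 j, i1 ≤ i2 → i2 < μ j → T i1 j ≤ T i2 j) ∧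
  (∀ i j1 j2, j1 < j2 → i < μ j2 → T i j1 < T i j2) ∧
  (∀ i j, i < μ j → 1 ≤ T i j ∧ T i j ≤ k) ∧
  (∀ i j, ¬ i < μ j → T i j = 0)

def CC (μ : ℕ → ℕ) (k : ℕ) : ℕ := Nat.card {T : ℕ → ℕ → ℕ // IsSSYT μ k T}

lemma ssyt_le {μ : ℕ → ℕ} {k : ℕ} {T : ℕ → ℕ → ℕ} (hT : IsSSYT μ k T) (i j : ℕ) :
    T i j ≤ k := by
  by_cases h : i < μ j
  · exact (hT.2.2.1 i j h).2
  · rw [hT.2.2.2 i j h]; omega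

lemma ssyt_finite (μ : ℕ → ℕ) (k K : ℕ) (hμ : ∀ a b : ℕ, a ≤ b → μ b ≤ μ a)
    (hrows : ∀ j, K ≤ j → μ j = 0) : Finite {T : ℕ → ℕ → ℕ // IsSSYT μ k T} := by
  apply Finite.of_injective
    (f := fun T : {T : ℕ → ℕ → ℕ // IsSSYT μ k T} =>
      (fun p : Fin (μ 0) × Fin K => (⟨T.1 p.1 p.2, Nat.lt_succ_of_le (ssyt_le T.2 p.1 p.2)⟩ : Fin (k+1))))
  intro T1 T2 h
  apply Subtype.ext
  funext i j
  by_cases hc : i < μ j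
  · have hjK : j < K := by
      by_contra hK; push_neg at hK; rw [hrows j hK] at hc; omega
    have hi0 : i < μ 0 := lt_of_lt_of_le hc (hμ 0 j (Nat.zero_le j))
    have := congrFun h (⟨i, hi0⟩, ⟨j, hjK⟩)
    simpa using congrArg Fin.val this
  · rw [T1.2.2.2.2 i j hc, T2.2.2.2.2 i j hc]

lemma CC_of_zero (μ : ℕ → ℕ) (k : ℕ) (h0 : ∀ j, μ j = 0) : CC μ k = 1 := by
  rw [CC, Nat.card_eq_one_iff_exists]
  refine ⟨⟨fun _ _ => 0, ?_, ?_, ?_, ?_⟩, ?_⟩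
  · intro i1 i2 j _ h2; exact absurd h2 (by rw [h0 j]; omega)
  · intro i j1 j2 _ h2; exact absurd h2 (by rw [h0 j2]; omega)
  · intro i j h; exact absurd h (by rw [h0 j]; omega)
  · intro _ _ _; rfl
  · rintro ⟨T, hT⟩
    apply Subtype.ext
    funext i j
    exact hT.2.2.2 i j (by rw [h0 j]; omega)

lemma filter_lower_card {m : ℕ} (P : ℕ → Prop) [DecidablePred P]
    (hlow : ∀ a b : ℕ, a ≤ b → b < m → P b → P a) {x : ℕ} (hx : x < m) :
    (P x ↔ x < ((range m).filter P).card) := by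
  constructor
  · intro hPx
    have hsub : range (x+1) ⊆ (range m).filter P := by
      intro a ha; rw [mem_range] at ha; rw [mem_filter, mem_range]
      exact ⟨by omega, hlow a x (by omega) hx hPx⟩
    have := Finset.card_le_card hsub
    rw [Finset.card_range] at this; omega
  · intro hcard
    by_contra hPx
    have hsub : (range m).filter P ⊆ range x := by
      intro a ha; rw [mem_filter, mem_range] at ha; rw [mem_range]
      by_contra h; push_neg at h
      exact hPx (hlow x a h ha.1 ha.2)
    have := Finset.card_le_card hsub
    rw [Finset.card_range] at this; omega

section rec
variable (k : ℕ) (μ : ℕ → ℕ)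

def vOf (T : ℕ → ℕ → ℕ) : Fin k → ℕ :=
  fun i => ((range (μ (i:ℕ))).filter (fun i' => T i' (i:ℕ) ≤ k)).card

variable {k μ}

lemma vOf_le (T : ℕ → ℕ → ℕ) (i : Fin k) : vOf k μ T i ≤ μ (i:ℕ) := by
  calc ((range (μ (i:ℕ))).filter (fun i' => T i' (i:ℕ) ≤ k)).card
      ≤ (range (μ (i:ℕ))).card := Finset.card_filter_le _ _
    _ = μ (i:ℕ) := Finset.card_range _

lemma vOf_prefix {T : ℕ → ℕ → ℕ} (hT : IsSSYT μ (k+1) T) (j : ℕ) (hj : j < k)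
    {i : ℕ} (hi : i < μ j) :
    (T i j ≤ k ↔ i < vOf k μ T ⟨j, hj⟩) := by
  have := filter_lower_card (m := μ j) (fun i' => T i' j ≤ k)
    (fun a b hab hbm hPb => le_trans (hT.1 a b j hab hbm) hPb) hi
  simpa [vOf] using this

/-- entries in row j are at least j+1 -/
lemma ssyt_entry_ge (hμ : ∀ a b : ℕ, a ≤ b → μ b ≤ μ a) {T : ℕ → ℕ → ℕ} {kk : ℕ}
    (hT : IsSSYT μ kk T) : ∀ j i, i < μ j → j + 1 ≤ T i j := by
  intro j
  induction j with
  | zero => intro i hi; exact (hT.2.2.1 i 0 hi).1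
  | succ j ih =>
      intro i hi
      have h1 : i < μ j := lt_of_lt_of_le hi (hμ j (j+1) (by omega))
      have h2 := ih i h1
      have h3 := hT.2.1 i j (j+1) (by omega) hi
      omega

variable (k μ) in
def SOf (T : ℕ → ℕ → ℕ) : ℕ → ℕ → ℕ :=
  fun i j => if i < extd k (vOf k μ T) j then T i j else 0

variable (k μ) in
def TOf (v : Fin k → ℕ) (S : ℕ → ℕ → ℕ) : ℕ → ℕ → ℕ :=
  fun i j => if i < extd k v j then S i j else if i < μ j then k+1 else 0

lemma extd_le_mu (hμ : ∀ a b : ℕ, a ≤ b → μ b ≤ μ a) {v : Fin k → ℕ} (hv : v ∈ box k μ) (j : ℕ) :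
    extd k v j ≤ μ j := by
  rw [extd]
  split
  · rename_i h
    have := (Fintype.mem_piFinset.mp hv ⟨j, h⟩)
    rw [mem_Icc] at this
    exact this.2
  · omega

lemma mu_succ_le_extd {v : Fin k → ℕ} (hv : v ∈ box k μ) {j : ℕ} (hj : j < k) :
    μ (j+1) ≤ extd k v j := by
  have := (Fintype.mem_piFinset.mp hv ⟨j, hj⟩)
  rw [mem_Icc] at this
  rw [extd, dif_pos hj]
  exact this.1

lemma cross1 (hμ : ∀ a b : ℕ, a ≤ b → μ b ≤ μ a) {v : Fin k → ℕ} (hv : v ∈ box k μ)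
    {i j1 j2 : ℕ} (h12 : j1 < j2) (hi : i < extd k v j2) : i < extd k v j1 := by
  have hj2 : j2 < k := by
    by_contra h; push_neg at h; rw [extd, dif_neg (by omega)] at hi; omega
  have hj1 : j1 < k := by omega
  calc i < extd k v j2 := hi
    _ ≤ μ j2 := extd_le_mu hμ hv j2
    _ ≤ μ (j1+1) := hμ (j1+1) j2 (by omega)
    _ ≤ extd k v j1 := mu_succ_le_extd hv hj1

lemma cross2 (hμ : ∀ a b : ℕ, a ≤ b → μ b ≤ μ a) (hrows : ∀ j, k+1 ≤ j → μ j = 0)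
    {v : Fin k → ℕ} (hv : v ∈ box k μ)
    {i j1 j2 : ℕ} (h12 : j1 < j2) (hi : i < μ j2) : i < extd k v j1 := by
  have hj1 : j1 < k := by
    by_contra h; push_neg at h
    rw [hrows j2 (by omega)] at hi; omega
  calc i < μ j2 := hi
    _ ≤ μ (j1+1) := hμ (j1+1) j2 (by omega)
    _ ≤ extd k v j1 := mu_succ_le_extd hv hj1

lemma vOf_mem (hμ : ∀ a b : ℕ, a ≤ b → μ b ≤ μ a) {T : ℕ → ℕ → ℕ} (hT : IsSSYT μ (k+1) T) :
    vOf k μ T ∈ box k μ := by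
  rw [box, Fintype.mem_piFinset]
  intro i
  rw [mem_Icc]
  refine ⟨?_, vOf_le T i⟩
  have hsub : range (μ ((i:ℕ)+1)) ⊆ (range (μ (i:ℕ))).filter (fun i' => T i' (i:ℕ) ≤ k) := by
    intro a ha
    rw [mem_range] at ha
    rw [mem_filter, mem_range]
    have hcol := hT.2.1 a (i:ℕ) ((i:ℕ)+1) (by omega) ha
    have hle := ssyt_le hT a ((i:ℕ)+1)
    exact ⟨lt_of_lt_of_le ha (hμ (i:ℕ) ((i:ℕ)+1) (by omega)), by omega⟩
  have := Finset.card_le_card hsub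
  rw [Finset.card_range] at this
  exact this

lemma extd_vOf {T : ℕ → ℕ → ℕ} {j : ℕ} (hj : j < k) :
    extd k (vOf k μ T) j = vOf k μ T ⟨j, hj⟩ := by rw [extd, dif_pos hj]

lemma SOf_is (hμ : ∀ a b : ℕ, a ≤ b → μ b ≤ μ a) {T : ℕ → ℕ → ℕ} (hT : IsSSYT μ (k+1) T) :
    IsSSYT (extd k (vOf k μ T)) k (SOf k μ T) := by
  have hvm := vOf_mem hμ hT
  refine ⟨?_, ?_, ?_, ?_⟩
  · intro i1 i2 j h12 h2
    have h1 : i1 < extd k (vOf k μ T) j := by omega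
    simp only [SOf]; rw [if_pos h1, if_pos h2]
    have hjk : j < k := by
      by_contra h; push_neg at h; rw [extd, dif_neg (by omega)] at h2; omega
    exact hT.1 i1 i2 j h12 (lt_of_lt_of_le h2 (extd_le_mu hμ hvm j))
  · intro i j1 j2 h12 h2
    have h1 : i < extd k (vOf k μ T) j1 := cross1 hμ hvm h12 h2
    simp only [SOf]; rw [if_pos h1, if_pos h2]
    exact hT.2.1 i j1 j2 h12 (lt_of_lt_of_le h2 (extd_le_mu hμ hvm j2))
  · intro i j hij
    simp only [SOf]; rw [if_pos hij]
    have hjk : j < k := by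
      by_contra h; push_neg at h; rw [extd, dif_neg (by omega)] at hij; omega
    have hiμ : i < μ j := lt_of_lt_of_le hij (extd_le_mu hμ hvm j)
    have hb := hT.2.2.1 i j hiμ
    rw [extd_vOf hjk] at hij
    have := (vOf_prefix hT j hjk hiμ).mpr hij
    exact ⟨hb.1, this⟩
  · intro i j hij
    simp only [SOf]; rw [if_neg hij]

lemma TOf_is (hμ : ∀ a b : ℕ, a ≤ b → μ b ≤ μ a) (hrows : ∀ j, k+1 ≤ j → μ j = 0)
    {v : Fin k → ℕ} (hv : v ∈ box k μ) {S : ℕ → ℕ → ℕ} (hS : IsSSYT (extd k v) k S) :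
    IsSSYT μ (k+1) (TOf k μ v S) := by
  refine ⟨?_, ?_, ?_, ?_⟩
  · intro i1 i2 j h12 h2
    by_cases hc2 : i2 < extd k v j
    · have hc1 : i1 < extd k v j := by omega
      simp only [TOf]; rw [if_pos hc1, if_pos hc2]
      exact hS.1 i1 i2 j h12 hc2
    · by_cases hc1 : i1 < extd k v j
      · simp only [TOf]; rw [if_pos hc1, if_neg hc2, if_pos h2]
        have := (hS.2.2.1 i1 j hc1).2
        omega
      · simp only [TOf]; rw [if_neg hc1, if_neg hc2, if_pos h2, if_pos (by omega : i1 < μ j)]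
  · intro i j1 j2 h12 h2
    by_cases hc2 : i < extd k v j2
    · have hc1 : i < extd k v j1 := cross1 hμ hv h12 hc2
      simp only [TOf]; rw [if_pos hc1, if_pos hc2]
      exact hS.2.1 i j1 j2 h12 hc2
    · have hc1 : i < extd k v j1 := cross2 hμ hrows hv h12 h2
      simp only [TOf]; rw [if_pos hc1, if_neg hc2, if_pos h2]
      have := (hS.2.2.1 i j1 hc1).2
      omega
  · intro i j hij
    by_cases hc : i < extd k v j
    · simp only [TOf]; rw [if_pos hc]
      have := hS.2.2.1 i j hc
      omega
    · simp only [TOf]; rw [if_neg hc, if_pos hij]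
      omega
  · intro i j hij
    have hc : ¬ i < extd k v j := by
      have := extd_le_mu hμ hv j; omega
    simp only [TOf]; rw [if_neg hc, if_neg hij]

lemma TOf_SOf (hμ : ∀ a b : ℕ, a ≤ b → μ b ≤ μ a) {T : ℕ → ℕ → ℕ} (hT : IsSSYT μ (k+1) T) :
    TOf k μ (vOf k μ T) (SOf k μ T) = T := by
  funext i j
  by_cases h1 : i < extd k (vOf k μ T) j
  · simp only [TOf]; rw [if_pos h1, SOf, if_pos h1]
  · by_cases h2 : i < μ j
    · simp only [TOf]; rw [if_neg h1, if_pos h2]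
      by_cases hjk : j < k
      · rw [extd_vOf hjk] at h1
        have := (vOf_prefix hT j hjk h2)
        have hle := ssyt_le hT i j
        omega
      · have := ssyt_entry_ge hμ hT j i h2
        have hle := ssyt_le hT i j
        omega
    · simp only [TOf]; rw [if_neg h1, if_neg h2]
      exact (hT.2.2.2 i j h2).symm

lemma vOf_TOf (hμ : ∀ a b : ℕ, a ≤ b → μ b ≤ μ a)
    {v : Fin k → ℕ} (hv : v ∈ box k μ) {S : ℕ → ℕ → ℕ} (hS : IsSSYT (extd k v) k S) :
    vOf k μ (TOf k μ v S) = v := by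
  funext i
  rw [vOf]
  have hext : extd k v (i:ℕ) = v i := by rw [extd, dif_pos i.isLt]
  have hfe : (range (μ (i:ℕ))).filter (fun i' => TOf k μ v S i' (i:ℕ) ≤ k)
      = range (v i) := by
    ext a
    rw [mem_filter, mem_range, mem_range]
    constructor
    · rintro ⟨ha, hTa⟩
      by_contra h
      push_neg at h
      have hc : ¬ a < extd k v (i:ℕ) := by omega
      simp only [TOf] at hTa; rw [if_neg hc, if_pos ha] at hTa
      omega
    · intro ha
      have hav : a < extd k v (i:ℕ) := by omega
      have haμ : a < μ (i:ℕ) := lt_of_lt_of_le hav (extd_le_mu hμ hv (i:ℕ))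
      refine ⟨haμ, ?_⟩
      simp only [TOf]; rw [if_pos hav]
      exact (hS.2.2.1 a (i:ℕ) hav).2
  rw [hfe, Finset.card_range]

lemma SOf_TOf (hμ : ∀ a b : ℕ, a ≤ b → μ b ≤ μ a)
    {v : Fin k → ℕ} (hv : v ∈ box k μ) {S : ℕ → ℕ → ℕ} (hS : IsSSYT (extd k v) k S) :
    SOf k μ (TOf k μ v S) = S := by
  funext i j
  simp only [SOf]; rw [vOf_TOf hμ hv hS]
  by_cases hc : i < extd k v j
  · rw [if_pos hc, TOf, if_pos hc]
  · rw [if_neg hc]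
    exact (hS.2.2.2 i j hc).symm

variable (k μ) in
def recEquiv (hμ : ∀ a b : ℕ, a ≤ b → μ b ≤ μ a) (hrows : ∀ j, k+1 ≤ j → μ j = 0) :
    {T : ℕ → ℕ → ℕ // IsSSYT μ (k+1) T}
      ≃ Σ v : {v : Fin k → ℕ // v ∈ box k μ}, {S : ℕ → ℕ → ℕ // IsSSYT (extd k v.1) k S} where
  toFun T := ⟨⟨vOf k μ T.1, vOf_mem hμ T.2⟩, ⟨SOf k μ T.1, SOf_is hμ T.2⟩⟩
  invFun p := ⟨TOf k μ p.1.1 p.2.1, TOf_is hμ hrows p.1.2 p.2.2⟩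
  left_inv T := Subtype.ext (TOf_SOf hμ T.2)
  right_inv p := by
    rcases p with ⟨⟨v, hv⟩, ⟨S, hS⟩⟩
    exact Sigma.subtype_ext (Subtype.ext (vOf_TOf hμ hv hS)) (SOf_TOf hμ hv hS)

lemma extd_antitone {v : Fin k → ℕ} (hv : v ∈ box k μ) (hμ : ∀ a b : ℕ, a ≤ b → μ b ≤ μ a) :
    ∀ a b : ℕ, a ≤ b → extd k v b ≤ extd k v a := by
  have hstep : ∀ a : ℕ, extd k v (a+1) ≤ extd k v a := by
    intro a
    by_cases h1 : a + 1 < k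
    · calc extd k v (a+1) ≤ μ (a+1) := extd_le_mu hμ hv (a+1)
        _ ≤ extd k v a := mu_succ_le_extd hv (by omega)
    · rw [extd, dif_neg (by omega)]; omega
  intro a b hab
  induction b with
  | zero => have : a = 0 := by omega
            rw [this]
  | succ b ih =>
      rcases Nat.lt_or_ge a (b+1) with h | h
      · exact le_trans (hstep b) (ih (by omega))
      · have : a = b + 1 := by omega
        rw [this]

lemma extd_rows {v : Fin k → ℕ} : ∀ j, k ≤ j → extd k v j = 0 := by
  intro j hj; rw [extd, dif_neg (by omega)]

lemma CC_rec (hμ : ∀ a b : ℕ, a ≤ b → μ b ≤ μ a) (hrows : ∀ j, k+1 ≤ j → μ j = 0) :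
    CC μ (k+1) = ∑ v ∈ box k μ, CC (extd k v) k := by
  have hfin : ∀ v : {v : Fin k → ℕ // v ∈ box k μ},
      Finite {S : ℕ → ℕ → ℕ // IsSSYT (extd k v.1) k S} := by
    intro v
    exact ssyt_finite (extd k v.1) k k (extd_antitone v.2 hμ) extd_rows
  letI : ∀ v : {v : Fin k → ℕ // v ∈ box k μ},
      Fintype {S : ℕ → ℕ → ℕ // IsSSYT (extd k v.1) k S} := fun v => @Fintype.ofFinite _ (hfin v)
  rw [CC, Nat.card_congr (recEquiv k μ hμ hrows)]
  rw [Nat.card_eq_fintype_card, Fintype.card_sigma]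
  rw [← Finset.sum_coe_sort (box k μ) (fun v => CC (extd k v) k)]
  apply Finset.sum_congr rfl
  intro v _
  rw [CC, Nat.card_eq_fintype_card]

end rec

lemma CC_eq_Wq : ∀ (k : ℕ) (μ : ℕ → ℕ), (∀ a b : ℕ, a ≤ b → μ b ≤ μ a) →
    (∀ j, k ≤ j → μ j = 0) → (CC μ k : ℚ) = Wq k μ := by
  intro k
  induction k with
  | zero =>
      intro μ hμ hrows
      rw [CC_of_zero μ 0 (fun j => hrows j (Nat.zero_le j)), Wq]
      simp [D, sf]
  | succ k ih =>
      intro μ hμ hrows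
      rw [CC_rec hμ hrows]
      push_cast
      rw [Finset.sum_congr rfl
        (fun v hv => ih (extd k v) (extd_antitone hv hμ) extd_rows), Wq_rec k μ hμ]

lemma prod_pairs_rev {M : Type*} [CommMonoid M] {m : ℕ} (f : Fin m → Fin m → M) :
    ∏ i, ∏ j ∈ Ioi i, f i j = ∏ i, ∏ j ∈ Ioi i, f (Fin.rev j) (Fin.rev i) := by
  rw [Finset.prod_sigma', Finset.prod_sigma']
  refine Finset.prod_nbij' (fun p => ⟨Fin.rev p.2, Fin.rev p.1⟩)
    (fun p => ⟨Fin.rev p.2, Fin.rev p.1⟩) ?_ ?_ ?_ ?_ ?_ <;>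
    simp [Fin.rev_lt_rev, Fin.rev_rev]

lemma Ioi_fin_prod {M : Type*} [CommMonoid M] {m : ℕ} (a : Fin m) (g : ℕ → M) :
    ∏ b ∈ Ioi a, g (b:ℕ) = ∏ j' ∈ Ioo (a:ℕ) m, g j' := by
  have he : Ioo (a:ℕ) m = Ioc (a:ℕ) (m-1) := by
    ext x; rw [mem_Ioo, mem_Ioc]
    have := a.isLt; omega
  rw [← Fin.map_valEmbedding_Ioi, Finset.prod_map]
  rfl

lemma D_Yv (k : ℕ) (μ : ℕ → ℕ) :
    D (fun r : Fin k => (Yv k μ r : ℚ))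
      = ∏ j ∈ range k, ∏ j' ∈ Ioo j k, ((Ajf k μ j : ℚ) - (Ajf k μ j' : ℚ)) := by
  rw [D, prod_pairs_rev (f := fun i j : Fin k => ((Yv k μ j : ℚ) - (Yv k μ i : ℚ)))]
  have hY : ∀ a : Fin k, (Yv k μ (Fin.rev a) : ℕ) = Ajf k μ (a:ℕ) := by
    intro a
    have e : k - 1 - ((Fin.rev a):ℕ) = (a:ℕ) := by rw [Fin.val_rev]; omega
    rw [Yv]
    simp only [e]
    rw [Ajf, Fin.val_rev]
    omega
  have step : ∀ i : Fin k, ∏ j ∈ Ioi i, ((Yv k μ (Fin.rev i) : ℚ) - (Yv k μ (Fin.rev j) : ℚ))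
      = ∏ j' ∈ Ioo (i:ℕ) k, ((Ajf k μ (i:ℕ) : ℚ) - (Ajf k μ j' : ℚ)) := by
    intro i
    rw [← Ioi_fin_prod i (fun j' => ((Ajf k μ (i:ℕ) : ℚ) - (Ajf k μ j' : ℚ)))]
    apply Finset.prod_congr rfl
    intro j _
    rw [hY i, hY j]
  calc ∏ i, ∏ j ∈ Ioi i, ((Yv k μ (Fin.rev i) : ℚ) - (Yv k μ (Fin.rev j) : ℚ))
      = ∏ i : Fin k, ∏ j' ∈ Ioo (i:ℕ) k, ((Ajf k μ (i:ℕ) : ℚ) - (Ajf k μ j' : ℚ)) :=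
        Finset.prod_congr rfl (fun i _ => step i)
    _ = ∏ j ∈ range k, ∏ j' ∈ Ioo j k, ((Ajf k μ j : ℚ) - (Ajf k μ j' : ℚ)) :=
        Fin.prod_univ_eq_prod_range
          (fun j => ∏ j' ∈ Ioo j k, ((Ajf k μ j : ℚ) - (Ajf k μ j' : ℚ))) k

lemma sf_pos (k : ℕ) : 0 < sf k := Finset.prod_pos (fun m _ => Nat.factorial_pos m)

lemma sf_reflect (k : ℕ) : ∏ j ∈ range k, Nat.factorial (k - 1 - j) = sf k := by
  rw [sf, ← Finset.prod_range_reflect (fun m => Nat.factorial m) k]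

lemma Wq_hook (k : ℕ) (μ : ℕ → ℕ) (hμ : ∀ a b : ℕ, a ≤ b → μ b ≤ μ a) :
    Wq k μ * (∏ j ∈ range k, ∏ i ∈ range (μ j), (hkf k μ i j : ℚ))
      = ∏ j ∈ range k, ∏ i ∈ range (μ j), ((k : ℚ) - j + i) := by
  have hsf : ((sf k : ℕ) : ℚ) ≠ 0 := by
    have := sf_pos k
    positivity
  rw [Wq, D_Yv, div_mul_eq_mul_div, div_eq_iff hsf]
  have hrow : ∀ j ∈ range k,
      (∏ j' ∈ Ioo j k, ((Ajf k μ j : ℚ) - (Ajf k μ j' : ℚ)))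
        * (∏ i ∈ range (μ j), (hkf k μ i j : ℚ))
      = ((Nat.factorial (Ajf k μ j) : ℕ) : ℚ) := by
    intro j hj
    rw [mem_range] at hj
    have h1 : ∀ j' ∈ Ioo j k, ((Ajf k μ j : ℚ) - (Ajf k μ j' : ℚ))
        = (((Ajf k μ j - Ajf k μ j' : ℕ)) : ℚ) := by
      intro j' hj'
      rw [mem_Ioo] at hj'
      rw [Nat.cast_sub (le_of_lt (Ajf_lt k μ hμ hj'.1 hj'.2))]
    rw [Finset.prod_congr rfl h1, ← Nat.cast_prod, ← Nat.cast_prod, ← Nat.cast_mul]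
    rw [mul_comm, hook_row k μ hμ hj]
  have hrow2 : ∀ j ∈ range k,
      (∏ i ∈ range (μ j), ((k : ℚ) - j + i)) * ((Nat.factorial (k - 1 - j) : ℕ) : ℚ)
      = ((Nat.factorial (Ajf k μ j) : ℕ) : ℚ) := by
    intro j hj
    rw [mem_range] at hj
    have h1 : ∀ i ∈ range (μ j), ((k : ℚ) - j + i) = (((k - j + i : ℕ)) : ℚ) := by
      intro i _
      rw [Nat.cast_add, Nat.cast_sub (by omega : j ≤ k)]
    rw [Finset.prod_congr rfl h1, ← Nat.cast_prod, ← Nat.cast_mul, content_row k μ hj]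
  calc (∏ j ∈ range k, ∏ j' ∈ Ioo j k, ((Ajf k μ j : ℚ) - (Ajf k μ j' : ℚ)))
        * (∏ j ∈ range k, ∏ i ∈ range (μ j), (hkf k μ i j : ℚ))
      = ∏ j ∈ range k, ((∏ j' ∈ Ioo j k, ((Ajf k μ j : ℚ) - (Ajf k μ j' : ℚ)))
          * (∏ i ∈ range (μ j), (hkf k μ i j : ℚ))) := by
        rw [← Finset.prod_mul_distrib]
    _ = ∏ j ∈ range k, ((Nat.factorial (Ajf k μ j) : ℕ) : ℚ) :=
        Finset.prod_congr rfl hrow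
    _ = ∏ j ∈ range k, ((∏ i ∈ range (μ j), ((k : ℚ) - j + i))
          * ((Nat.factorial (k - 1 - j) : ℕ) : ℚ)) :=
        (Finset.prod_congr rfl hrow2).symm
    _ = (∏ j ∈ range k, ∏ i ∈ range (μ j), ((k : ℚ) - j + i)) * ((sf k : ℕ) : ℚ) := by
        rw [Finset.prod_mul_distrib, ← Nat.cast_prod, sf_reflect]

end HookAux
end


lemma mem_cellsOf {n : ℕ} {μ : Fin n → ℕ} {c : Fin n × Fin n} :
    c ∈ cellsOf n μ ↔ (c.1:ℕ) < μ c.2 := by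
  simp [cellsOf]

namespace HookAux

lemma prod_rows_ext {M : Type*} [CommMonoid M] (μ' : ℕ → ℕ) (f : ℕ → ℕ → M)
    {m1 m2 : ℕ} (h12 : m1 ≤ m2) (hz : ∀ j, m1 ≤ j → μ' j = 0) :
    ∏ j ∈ range m2, ∏ i ∈ range (μ' j), f i j
      = ∏ j ∈ range m1, ∏ i ∈ range (μ' j), f i j := by
  symm
  apply Finset.prod_subset (Finset.range_subset_range.mpr h12)
  intro j hj2 hj1
  rw [mem_range] at hj2
  rw [mem_range] at hj1
  rw [hz j (by omega), Finset.range_zero, Finset.prod_empty]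

end HookAux

lemma cells_prod {n : ℕ} (μ : Fin n → ℕ) (μ' : ℕ → ℕ)
    (hrel : ∀ j : Fin n, μ' (j:ℕ) = μ j) (hle : ∀ j, μ' j ≤ n)
    {M : Type*} [CommMonoid M] (f : ℕ → ℕ → M) :
    ∏ c ∈ cellsOf n μ, f (c.1:ℕ) (c.2:ℕ)
      = ∏ j ∈ range n, ∏ i ∈ range (μ' j), f i j := by
  rw [Finset.prod_sigma']
  refine Finset.prod_bij' (fun (c : Fin n × Fin n) (hc : c ∈ cellsOf n μ) =>
      (⟨(c.2:ℕ), (c.1:ℕ)⟩ : Σ _ : ℕ, ℕ))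
    (fun (p : Σ _ : ℕ, ℕ) (hp : p ∈ (range n).sigma (fun j => range (μ' j))) =>
      ((⟨p.2, by rw [Finset.mem_sigma, mem_range, mem_range] at hp
                 exact lt_of_lt_of_le hp.2 (hle p.1)⟩ : Fin n),
       (⟨p.1, by rw [Finset.mem_sigma, mem_range] at hp; exact hp.1⟩ : Fin n)))
    ?_ ?_ ?_ ?_ ?_
  · intro c hc
    rw [mem_cellsOf] at hc
    rw [Finset.mem_sigma, mem_range, mem_range]
    exact ⟨c.2.isLt, by rw [hrel c.2]; exact hc⟩
  · intro p hp
    have hp' := hp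
    rw [Finset.mem_sigma, mem_range, mem_range] at hp'
    rw [mem_cellsOf]
    show (p.2 : ℕ) < μ ⟨p.1, _⟩
    rw [← hrel ⟨p.1, hp'.1⟩]
    exact hp'.2
  · intro c hc
    exact Prod.ext (Fin.ext rfl) (Fin.ext rfl)
  · intro p hp
    rfl
  · intro c hc
    rfl

lemma hookLen_eq {n : ℕ} (k : ℕ) (μ : Fin n → ℕ) (μ' : ℕ → ℕ)
    (hrel : ∀ j : Fin n, μ' (j:ℕ) = μ j) (hle : ∀ j, μ' j ≤ n)
    (hz : ∀ j, n ≤ j → μ' j = 0) (hrows : ∀ j, k ≤ j → μ' j = 0)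
    (c : Fin n × Fin n) (hc : c ∈ cellsOf n μ) :
    hookLen n μ c = HookAux.hkf k μ' (c.1:ℕ) (c.2:ℕ) := by
  rw [mem_cellsOf] at hc
  have hcell : (c.1:ℕ) < μ' (c.2:ℕ) := by rw [hrel c.2]; exact hc
  have harm : ((cellsOf n μ).filter fun d => d.2 = c.2 ∧ c.1 < d.1).card
      = μ' (c.2:ℕ) - (c.1:ℕ) - 1 := by
    rw [← Nat.card_Ioo]
    refine Finset.card_bij' (fun (d : Fin n × Fin n) (hd : _) => (d.1:ℕ))
      (fun (x : ℕ) (hx : x ∈ Ioo (c.1:ℕ) (μ' (c.2:ℕ))) =>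
        ((⟨x, lt_of_lt_of_le (mem_Ioo.mp hx).2 (hle (c.2:ℕ))⟩ : Fin n), c.2))
      ?_ ?_ ?_ ?_
    · intro d hd
      rw [Finset.mem_filter] at hd
      obtain ⟨hdc, hd2, hd1⟩ := hd
      rw [mem_cellsOf] at hdc
      have hv : ((d.2:ℕ)) = ((c.2:ℕ)) := congrArg Fin.val hd2
      have hlt : (d.1:ℕ) < μ' ((c.2:ℕ)) := by rw [← hv, hrel d.2]; exact hdc
      exact mem_Ioo.mpr ⟨hd1, hlt⟩
    · intro x hx
      rw [mem_Ioo] at hx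
      rw [Finset.mem_filter, mem_cellsOf]
      exact ⟨by rw [← hrel c.2]; exact hx.2, rfl, hx.1⟩
    · intro d hd
      rw [Finset.mem_filter] at hd
      exact Prod.ext (Fin.ext rfl) hd.2.1.symm
    · intro x hx
      rfl
  have hleg : ((cellsOf n μ).filter fun d => d.1 = c.1 ∧ c.2 < d.2).card
      = HookAux.Lf k μ' (c.1:ℕ) (c.2:ℕ) := by
    rw [HookAux.Lf]
    refine Finset.card_bij' (fun (d : Fin n × Fin n) (hd : _) => (d.2:ℕ))
      (fun (x : ℕ) (hx : x ∈ (Ioo (c.2:ℕ) k).filter (fun j' => (c.1:ℕ) < μ' j')) =>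
        (c.1, (⟨x, by
          rw [Finset.mem_filter, mem_Ioo] at hx
          by_contra h
          push_neg at h
          rw [hz x h] at hx
          omega⟩ : Fin n)))
      ?_ ?_ ?_ ?_
    · intro d hd
      rw [Finset.mem_filter] at hd
      obtain ⟨hdc, hd1, hd2⟩ := hd
      rw [mem_cellsOf] at hdc
      have hv1 : ((d.1:ℕ)) = ((c.1:ℕ)) := congrArg Fin.val hd1
      have hval : (c.1:ℕ) < μ' (d.2:ℕ) := by
        rw [← hv1, hrel d.2]; exact hdc
      have hdk : (d.2:ℕ) < k := by
        by_contra h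
        push_neg at h
        rw [hrows (d.2:ℕ) h] at hval
        omega
      exact Finset.mem_filter.mpr ⟨mem_Ioo.mpr ⟨hd2, hdk⟩, hval⟩
    · intro x hx
      rw [Finset.mem_filter, mem_Ioo] at hx
      rw [Finset.mem_filter, mem_cellsOf]
      refine ⟨?_, rfl, hx.1.1⟩
      show (c.1:ℕ) < μ _
      rw [← hrel]
      exact hx.2
    · intro d hd
      rw [Finset.mem_filter] at hd
      exact Prod.ext hd.2.1.symm (Fin.ext rfl)
    · intro x hx
      rfl
  rw [hookLen, harm, hleg, HookAux.hkf]
  omega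

lemma ssytCount_eq_CC {n : ℕ} (k : ℕ) (μ : Fin n → ℕ) (μ' : ℕ → ℕ)
    (hrel : ∀ j : Fin n, μ' (j:ℕ) = μ j) (hle : ∀ j, μ' j ≤ n)
    (hz : ∀ j, n ≤ j → μ' j = 0) (hanti : ∀ a b : ℕ, a ≤ b → μ' b ≤ μ' a) :
    ssytCount n k μ = HookAux.CC μ' k := by
  rw [ssytCount, HookAux.CC]
  apply Nat.card_congr
  have hmem : ∀ (i j : ℕ) (hj : j < n) (hij : i < μ' j),
      (((⟨i, lt_of_lt_of_le hij (hle j)⟩ : Fin n), (⟨j, hj⟩ : Fin n)) ∈ cellsOf n μ) := by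
    intro i j hj hij
    rw [mem_cellsOf]
    show (i:ℕ) < μ ⟨j, hj⟩
    rw [← hrel ⟨j, hj⟩]
    exact hij
  refine
    { toFun := fun T => ⟨fun i j =>
        if hj : j < n then
          (if hi : i < μ' j then
            T.1 ⟨(⟨i, lt_of_lt_of_le hi (hle j)⟩, ⟨j, hj⟩), hmem i j hj hi⟩
           else 0)
        else 0, ?_, ?_, ?_, ?_⟩
      invFun := fun S => ⟨fun c => S.1 (c.1.1:ℕ) (c.1.2:ℕ), ?_, ?_, ?_⟩
      left_inv := ?_
      right_inv := ?_ }
  · -- row monotone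
    intro i1 i2 j h12 h2
    have hj : j < n := by
      by_contra h; push_neg at h; rw [hz j h] at h2; omega
    have h1 : i1 < μ' j := by omega
    beta_reduce
    simp only [dif_pos hj, dif_pos h2, dif_pos h1]
    exact T.2.1 _ _ rfl (by exact h12)
  · -- column strict
    intro i j1 j2 h12 h2
    have hj2 : j2 < n := by
      by_contra h; push_neg at h; rw [hz j2 h] at h2; omega
    have hj1 : j1 < n := by omega
    have h1 : i < μ' j1 := lt_of_lt_of_le h2 (hanti j1 j2 (by omega))
    beta_reduce
    simp only [dif_pos hj1, dif_pos h1, dif_pos hj2, dif_pos h2]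
    exact T.2.2.1 _ _ rfl (by exact h12)
  · -- bounds
    intro i j hij
    have hj : j < n := by
      by_contra h; push_neg at h; rw [hz j h] at hij; omega
    beta_reduce
    simp only [dif_pos hj, dif_pos hij]
    exact T.2.2.2 _
  · -- zero off cells
    intro i j hij
    beta_reduce
    by_cases hj : j < n
    · simp only [dif_pos hj, dif_neg hij]
    · simp only [dif_neg hj]
  · -- invFun: row monotone
    intro c d hcd h12
    rcases c with ⟨⟨c1, c2⟩, hc⟩
    rcases d with ⟨⟨d1, d2⟩, hd⟩
    simp only at hcd h12 ⊢
    have hd2 : (d1:ℕ) < μ' (d2:ℕ) := by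
      rw [mem_cellsOf] at hd
      rw [hrel d2]; exact hd
    have := S.2.1 (c1:ℕ) (d1:ℕ) (d2:ℕ) h12 hd2
    rw [hcd]
    exact this
  · -- invFun: column strict
    intro c d hcd h12
    rcases c with ⟨⟨c1, c2⟩, hc⟩
    rcases d with ⟨⟨d1, d2⟩, hd⟩
    simp only at hcd h12 ⊢
    have hd2 : (d1:ℕ) < μ' (d2:ℕ) := by
      rw [mem_cellsOf] at hd
      rw [hrel d2]; exact hd
    have := S.2.2.1 (d1:ℕ) (c2:ℕ) (d2:ℕ) h12 hd2
    rw [hcd]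
    exact this
  · -- invFun: bounds
    intro c
    rcases c with ⟨⟨c1, c2⟩, hc⟩
    have hc2 : (c1:ℕ) < μ' (c2:ℕ) := by
      rw [mem_cellsOf] at hc
      rw [hrel c2]; exact hc
    exact S.2.2.2.1 (c1:ℕ) (c2:ℕ) hc2
  · -- left_inv : on the Fin-indexed side
    intro T
    apply Subtype.ext
    funext c
    rcases c with ⟨⟨c1, c2⟩, hc⟩
    have hc2 : (c1:ℕ) < μ' (c2:ℕ) := by
      rw [mem_cellsOf] at hc
      rw [hrel c2]; exact hc
    beta_reduce
    simp only [dif_pos c2.isLt, dif_pos hc2]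
  · -- right_inv : on the ℕ-indexed side
    intro S
    apply Subtype.ext
    funext i j
    beta_reduce
    by_cases hj : j < n
    · by_cases hi : i < μ' j
      · simp only [dif_pos hj, dif_pos hi]
      · simp only [dif_pos hj, dif_neg hi]
        exact (S.2.2.2.2 i j hi).symm
    · simp only [dif_neg hj]
      have : ¬ i < μ' j := by rw [hz j (by omega)]; omega
      exact (S.2.2.2.2 i j this).symm

/-- The number of semi-standard Young tableaux of shape `μ ⊢ n` with entries in
`{1, …, k}` equals `∏_{(i,j) ∈ μ} (k + i - j)/h(i,j)` (here stated with the hook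
product cleared, over `ℤ`), where `i` is the column index and `j` the row index of a
cell, so `i - j` is its content. -/
theorem ssyt_count_hook_content (n k : ℕ) (μ : Fin n → ℕ)
    (hμ : ∀ i j : Fin n, i ≤ j → μ j ≤ μ i) (hsum : ∑ i, μ i = n) :
    (ssytCount n k μ : ℤ) * ∏ c ∈ cellsOf n μ, (hookLen n μ c : ℤ)
      = ∏ c ∈ cellsOf n μ, ((k : ℤ) + (c.1 : ℤ) - (c.2 : ℤ)) := by
  classical
  set μ' : ℕ → ℕ := fun j => if h : j < n then μ ⟨j, h⟩ else 0 with hμ'def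
  have hrel : ∀ j : Fin n, μ' (j:ℕ) = μ j := by
    intro j; simp only [hμ'def, dif_pos j.isLt]
  have hle : ∀ j, μ' j ≤ n := by
    intro j
    by_cases hj : j < n
    · simp only [hμ'def, dif_pos hj]
      calc μ ⟨j, hj⟩ ≤ ∑ i, μ i :=
            Finset.single_le_sum (fun i _ => Nat.zero_le (μ i)) (Finset.mem_univ _)
        _ = n := hsum
    · simp only [hμ'def, dif_neg hj]; omega
  have hz : ∀ j, n ≤ j → μ' j = 0 := by
    intro j hj; simp only [hμ'def, dif_neg (by omega : ¬ j < n)]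
  have hanti : ∀ a b : ℕ, a ≤ b → μ' b ≤ μ' a := by
    intro a b hab
    by_cases hb : b < n
    · have ha : a < n := by omega
      simp only [hμ'def, dif_pos hb, dif_pos ha]
      exact hμ ⟨a, ha⟩ ⟨b, hb⟩ (by exact hab)
    · simp only [hμ'def, dif_neg hb]; omega
  have hcount := ssytCount_eq_CC k μ μ' hrel hle hz hanti
  by_cases hcase : ∀ j, k ≤ j → μ' j = 0
  · -- Case II : at most k rows
    have hCC : (HookAux.CC μ' k : ℚ) = HookAux.Wq k μ' := HookAux.CC_eq_Wq k μ' hanti hcase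
    have hWq := HookAux.Wq_hook k μ' hanti
    have hswap : ∀ (f : ℕ → ℕ → ℚ), ∏ j ∈ range n, ∏ i ∈ range (μ' j), f i j
        = ∏ j ∈ range k, ∏ i ∈ range (μ' j), f i j := by
      intro f
      rw [← HookAux.prod_rows_ext μ' f (le_max_left n k) hz]
      exact HookAux.prod_rows_ext μ' f (le_max_right n k) hcase
    have hhook : (∏ c ∈ cellsOf n μ, ((hookLen n μ c : ℕ) : ℚ))
        = ∏ j ∈ range k, ∏ i ∈ range (μ' j), ((HookAux.hkf k μ' i j : ℕ) : ℚ) := by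
      calc ∏ c ∈ cellsOf n μ, ((hookLen n μ c : ℕ) : ℚ)
          = ∏ c ∈ cellsOf n μ, ((HookAux.hkf k μ' ((c.1:ℕ)) ((c.2:ℕ)) : ℕ) : ℚ) :=
            Finset.prod_congr rfl (fun c hc => by
              rw [hookLen_eq k μ μ' hrel hle hz hcase c hc])
        _ = ∏ j ∈ range n, ∏ i ∈ range (μ' j), ((HookAux.hkf k μ' i j : ℕ) : ℚ) :=
            cells_prod μ μ' hrel hle (fun i j => ((HookAux.hkf k μ' i j : ℕ) : ℚ))
        _ = ∏ j ∈ range k, ∏ i ∈ range (μ' j), ((HookAux.hkf k μ' i j : ℕ) : ℚ) := hswap _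
    have hcont : (∏ c ∈ cellsOf n μ, ((k : ℚ) + ((c.1:ℕ) : ℚ) - ((c.2:ℕ) : ℚ)))
        = ∏ j ∈ range k, ∏ i ∈ range (μ' j), ((k : ℚ) - (j:ℚ) + (i:ℚ)) := by
      calc ∏ c ∈ cellsOf n μ, ((k : ℚ) + ((c.1:ℕ) : ℚ) - ((c.2:ℕ) : ℚ))
          = ∏ j ∈ range n, ∏ i ∈ range (μ' j), ((k : ℚ) + (i:ℚ) - (j:ℚ)) :=
            cells_prod μ μ' hrel hle (fun i j => ((k : ℚ) + (i:ℚ) - (j:ℚ)))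
        _ = ∏ j ∈ range k, ∏ i ∈ range (μ' j), ((k : ℚ) + (i:ℚ) - (j:ℚ)) := hswap _
        _ = ∏ j ∈ range k, ∏ i ∈ range (μ' j), ((k : ℚ) - (j:ℚ) + (i:ℚ)) :=
            Finset.prod_congr rfl (fun j _ => Finset.prod_congr rfl (fun i _ => by ring))
    have key : ((ssytCount n k μ : ℕ) : ℚ) * (∏ c ∈ cellsOf n μ, ((hookLen n μ c : ℕ) : ℚ))
        = ∏ c ∈ cellsOf n μ, ((k : ℚ) + ((c.1:ℕ) : ℚ) - ((c.2:ℕ) : ℚ)) := by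
      rw [hcount, hhook, hCC, hcont]
      exact hWq
    exact_mod_cast key
  · -- Case I : more than k rows, both sides vanish
    push_neg at hcase
    obtain ⟨j0, hk0, h0⟩ := hcase
    have hj0n : j0 < n := by
      by_contra h; push_neg at h; exact h0 (hz j0 h)
    have hkn : k < n := by omega
    have hCC0 : HookAux.CC μ' k = 0 := by
      have : IsEmpty {T : ℕ → ℕ → ℕ // HookAux.IsSSYT μ' k T} := by
        constructor
        rintro ⟨T, hT⟩
        have h1 : 0 < μ' j0 := Nat.pos_of_ne_zero h0
        have h2 := HookAux.ssyt_entry_ge hanti hT j0 0 h1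
        have h3 := HookAux.ssyt_le hT 0 j0
        omega
      rw [HookAux.CC]
      exact Nat.card_of_isEmpty
    have hcell : ((⟨0, by omega⟩ : Fin n), (⟨k, hkn⟩ : Fin n)) ∈ cellsOf n μ := by
      rw [mem_cellsOf]
      show (0:ℕ) < μ ⟨k, hkn⟩
      have e : μ' k = μ ⟨k, hkn⟩ := by simp only [hμ'def, dif_pos hkn]
      have hge := hanti k j0 (by omega)
      omega
    rw [hcount, hCC0]
    have hzero' : (∏ c ∈ cellsOf n μ, ((k : ℤ) + (c.1 : ℤ) - (c.2 : ℤ))) = 0 :=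
      Finset.prod_eq_zero hcell (by simp)
    rw [hzero']
    simp
end

section
/- The number of (a,b)-Dyck paths (lattice paths from (0,n) to (m,0) weakly below the diagonal, equivalently partitions μ with μ_i ≤ ⌊a(b-i)/b⌋ for 1 ≤ i ≤ b) for coprime positive integers a and b equals (1/(a+b))·binom(a+b, a). -/
open Finset

namespace RC

/-- number of elements of `T` with value `< i` -/
def cnt {n : ℕ} (T : Finset (Fin n)) (i : ℕ) : ℕ := (T.filter (fun x => x.val < i)).card

/-- height function -/
def ht (b : ℕ) {n : ℕ} (T : Finset (Fin n)) (i : ℕ) : ℤ := (n : ℤ) * cnt T i - (b : ℤ) * i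

def Dyck (b : ℕ) {n : ℕ} (T : Finset (Fin n)) : Prop := ∀ i ≤ n, 0 ≤ ht b T i

instance (b n : ℕ) (T : Finset (Fin n)) : Decidable (Dyck b T) := by
  unfold Dyck; infer_instance

def rot {n : ℕ} (s : Fin n) (T : Finset (Fin n)) : Finset (Fin n) := T.image (· + s)

lemma cnt_zero {n : ℕ} (T : Finset (Fin n)) : cnt T 0 = 0 := by
  simp [cnt]

lemma cnt_top {n : ℕ} (T : Finset (Fin n)) {i : ℕ} (h : n ≤ i) : cnt T i = T.card := by
  unfold cnt
  rw [filter_true_of_mem]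
  intro x _; exact lt_of_lt_of_le x.isLt h

lemma cnt_split {n : ℕ} (T : Finset (Fin n)) {i j : ℕ} (h : i ≤ j) :
    cnt T j = cnt T i + (T.filter (fun x => i ≤ x.val ∧ x.val < j)).card := by
  unfold cnt
  rw [← Finset.card_filter_add_card_filter_not (s := T.filter (fun x => x.val < j))
    (p := fun x => x.val < i)]
  congr 1
  · rw [Finset.filter_filter]
    congr 1
    apply Finset.filter_congr
    intro x _
    constructor
    · rintro ⟨_, h2⟩; exact h2
    · intro h1; exact ⟨lt_of_lt_of_le h1 h, h1⟩
  · rw [Finset.filter_filter]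
    congr 1
    apply Finset.filter_congr
    intro x _
    simp only [not_lt]
    tauto

lemma ht_zero {b n : ℕ} (T : Finset (Fin n)) : ht b T 0 = 0 := by
  simp [ht, cnt_zero]

lemma ht_top {b n : ℕ} (T : Finset (Fin n)) (hcard : T.card = b) : ht b T n = 0 := by
  simp [ht, cnt_top T (le_refl n), hcard]; ring

lemma rot_card {n : ℕ} (s : Fin n) (T : Finset (Fin n)) : (rot s T).card = T.card :=
  Finset.card_image_of_injective _ (add_left_injective s)

lemma rot_rot {n : ℕ} (s t : Fin n) (T : Finset (Fin n)) : rot s (rot t T) = rot (t + s) T := by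
  unfold rot
  rw [Finset.image_image]
  congr 1
  funext x
  simp [add_assoc]

lemma rot_neg_rot {n : ℕ} (s : Fin n) (T : Finset (Fin n)) : rot (-s) (rot s T) = T := by
  haveI : NeZero n := ⟨s.pos.ne'⟩
  rw [rot_rot, add_neg_cancel]
  unfold rot
  simp

lemma cnt_rot_le {n : ℕ} (T : Finset (Fin n)) (s : Fin n) {i : ℕ} (hi : i ≤ s.val) :
    cnt (rot s T) i + cnt T (n - s.val) = cnt T (n - s.val + i) := by
  have hs : s.val < n := s.isLt
  have h1 : cnt (rot s T) i
      = (T.filter (fun x => n - s.val ≤ x.val ∧ x.val < n - s.val + i)).card := by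
    unfold cnt rot
    rw [Finset.filter_image, Finset.card_image_of_injective _ (add_left_injective s)]
    congr 1
    apply Finset.filter_congr
    intro x _
    have hx : x.val < n := x.isLt
    have hv : (x + s).val = (x.val + s.val) % n := Fin.val_add x s
    rcases Nat.lt_or_ge (x.val + s.val) n with h | h
    · rw [Nat.mod_eq_of_lt h] at hv
      constructor <;> intro h2 <;> omega
    · have he : (x.val + s.val) % n = x.val + s.val - n := by
        rw [Nat.mod_eq_sub_mod h, Nat.mod_eq_of_lt (by omega)]
      rw [he] at hv
      constructor <;> intro h2 <;> omega
  have h2 := cnt_split T (Nat.le_add_right (n - s.val) i)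
  omega

lemma cnt_rot_ge {n : ℕ} (T : Finset (Fin n)) (s : Fin n) {i : ℕ} (hi : s.val ≤ i) (hin : i ≤ n) :
    cnt (rot s T) i + cnt T (n - s.val) = T.card + cnt T (i - s.val) := by
  have hs : s.val < n := s.isLt
  have h1 : cnt (rot s T) i
      = (T.filter (fun x => x.val < i - s.val ∨ n - s.val ≤ x.val)).card := by
    unfold cnt rot
    rw [Finset.filter_image, Finset.card_image_of_injective _ (add_left_injective s)]
    congr 1
    apply Finset.filter_congr
    intro x _
    have hx : x.val < n := x.isLt
    have hv : (x + s).val = (x.val + s.val) % n := Fin.val_add x s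
    rcases Nat.lt_or_ge (x.val + s.val) n with h | h
    · rw [Nat.mod_eq_of_lt h] at hv
      constructor <;> intro h2 <;> omega
    · have he : (x.val + s.val) % n = x.val + s.val - n := by
        rw [Nat.mod_eq_sub_mod h, Nat.mod_eq_of_lt (by omega)]
      rw [he] at hv
      constructor <;> intro h2 <;> omega
  have h2 : (T.filter (fun x => x.val < i - s.val ∨ n - s.val ≤ x.val)).card
      = cnt T (i - s.val) + (T.filter (fun x => n - s.val ≤ x.val)).card := by
    rw [Finset.filter_or, Finset.card_union_of_disjoint]
    · rfl
    · rw [Finset.disjoint_left]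
      intro x hx1 hx2
      rw [Finset.mem_filter] at hx1 hx2
      omega
  have h3 : (T.filter (fun x => n - s.val ≤ x.val)).card
      = (T.filter (fun x => n - s.val ≤ x.val ∧ x.val < n)).card := by
    congr 1
    apply Finset.filter_congr
    intro x _
    have := x.isLt
    constructor <;> intro h2 <;> [exact ⟨h2, this⟩; exact h2.1]
  have h4 := cnt_split T (Nat.sub_le n s.val)
  have h5 := cnt_top T (le_refl n)
  omega

lemma ht_rot_le {b n : ℕ} (T : Finset (Fin n)) (s : Fin n) {i : ℕ} (hi : i ≤ s.val) :
    ht b (rot s T) i = ht b T (n - s.val + i) - ht b T (n - s.val) := by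
  have hs : s.val ≤ n := le_of_lt s.isLt
  have hc : ((cnt (rot s T) i : ℤ)) + cnt T (n - s.val) = cnt T (n - s.val + i) := by
    exact_mod_cast congrArg (Nat.cast (R := ℤ)) (cnt_rot_le T s hi)
  unfold ht
  have e1 : ((n - s.val + i : ℕ) : ℤ) = (n : ℤ) - (s.val : ℤ) + i := by omega
  have e2 : ((n - s.val : ℕ) : ℤ) = (n : ℤ) - (s.val : ℤ) := by omega
  rw [e1, e2]
  linear_combination (n : ℤ) * hc

lemma ht_rot_ge {b n : ℕ} (T : Finset (Fin n)) (hcard : T.card = b) (s : Fin n) {i : ℕ}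
    (hi : s.val ≤ i) (hin : i ≤ n) :
    ht b (rot s T) i = ht b T (i - s.val) - ht b T (n - s.val) := by
  have hs : s.val ≤ n := le_of_lt s.isLt
  have hc : ((cnt (rot s T) i : ℤ)) + cnt T (n - s.val) = (b : ℤ) + cnt T (i - s.val) := by
    have h := cnt_rot_ge T s hi hin
    rw [hcard] at h
    exact_mod_cast congrArg (Nat.cast (R := ℤ)) h
  unfold ht
  have e1 : ((i - s.val : ℕ) : ℤ) = (i : ℤ) - (s.val : ℤ) := by omega
  have e2 : ((n - s.val : ℕ) : ℤ) = (n : ℤ) - (s.val : ℤ) := by omega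
  rw [e1, e2]
  linear_combination (n : ℤ) * hc

lemma dyck_rot_iff {b n : ℕ} (T : Finset (Fin n)) (hcard : T.card = b) (s : Fin n) :
    Dyck b (rot s T) ↔ ∀ j ≤ n, ht b T (n - s.val) ≤ ht b T j := by
  have hs : s.val < n := s.isLt
  constructor
  · intro hD j hj
    rcases le_or_gt (n - s.val) j with h | h
    · have hi : j - (n - s.val) ≤ s.val := by omega
      have h1 := ht_rot_le (b := b) T s hi
      have e : n - s.val + (j - (n - s.val)) = j := by omega
      rw [e] at h1
      have h2 := hD (j - (n - s.val)) (by omega)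
      rw [h1] at h2
      linarith
    · have h1 := ht_rot_ge T hcard s (Nat.le_add_left s.val j) (by omega)
      have e : j + s.val - s.val = j := by omega
      rw [e] at h1
      have h2 := hD (j + s.val) (by omega)
      rw [h1] at h2
      linarith
  · intro hm i hi
    rcases le_or_gt i s.val with h | h
    · rw [ht_rot_le (b := b) T s h]
      have := hm (n - s.val + i) (by omega)
      linarith
    · rw [ht_rot_ge T hcard s h.le hi]
      have := hm (i - s.val) (by omega)
      linarith

lemma ht_inj {b n : ℕ} (hco : Nat.Coprime b n) (T : Finset (Fin n)) {i j : ℕ}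
    (hi : i < n) (hj : j < n) (h : ht b T i = ht b T j) : i = j := by
  unfold ht at h
  have hd : (n : ℤ) ∣ (b : ℤ) * ((i : ℤ) - j) :=
    ⟨(cnt T i : ℤ) - cnt T j, by linear_combination -h⟩
  have hco' : IsCoprime (n : ℤ) (b : ℤ) :=
    Nat.isCoprime_iff_coprime.mpr (Nat.coprime_comm.mp hco)
  have hd2 : (n : ℤ) ∣ ((i : ℤ) - j) := hco'.dvd_of_dvd_mul_left hd
  have := Int.eq_zero_of_abs_lt_dvd hd2 (by rw [abs_sub_lt_iff]; omega)
  omega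

lemma mod_fix {n v : ℕ} (hv : v < n) : (n - (n - v) % n) % n = v := by
  rcases Nat.eq_zero_or_pos v with rfl | h
  · simp [Nat.mod_self]
  · have h1 : (n - v) % n = n - v := Nat.mod_eq_of_lt (by omega)
    rw [h1, Nat.sub_sub_self (le_of_lt hv), Nat.mod_eq_of_lt hv]

lemma ht_mod_top {b n : ℕ} (U : Finset (Fin n)) (hcard : U.card = b) (hn : 0 < n) {j : ℕ}
    (hj : j ≤ n) : ht b U (j % n) = ht b U j := by
  rcases lt_or_eq_of_le hj with h | rfl
  · rw [Nat.mod_eq_of_lt h]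
  · rw [Nat.mod_self, ht_zero, ht_top U hcard]

lemma neg_val {n : ℕ} (s : Fin n) : (-s).val = (n - s.val) % n := rfl

lemma key_count {b n : ℕ} (hn : 0 < n) (hco : Nat.Coprime b n) :
    (powersetCard b (univ : Finset (Fin n))).card
      = n * ((powersetCard b (univ : Finset (Fin n))).filter (fun T => Dyck b T)).card := by
  haveI : NeZero n := ⟨hn.ne'⟩
  set D := (powersetCard b (univ : Finset (Fin n))).filter (fun T => Dyck b T) with hD
  have hmemD : ∀ T ∈ D, T.card = b ∧ Dyck b T := by
    intro T hT
    rw [hD, Finset.mem_filter, Finset.mem_powersetCard_univ] at hT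
    exact hT
  have hbij : ((univ : Finset (Fin n)) ×ˢ D).card = (powersetCard b (univ : Finset (Fin n))).card := by
    apply Finset.card_bij (fun p _ => rot p.1 p.2)
    · intro p hp
      rw [Finset.mem_product] at hp
      rw [Finset.mem_powersetCard_univ, rot_card]
      exact (hmemD _ hp.2).1
    · intro p hp p' hp' heq
      rw [Finset.mem_product] at hp hp'
      obtain ⟨hc, hd⟩ := hmemD _ hp.2
      obtain ⟨hc', hd'⟩ := hmemD _ hp'.2
      have hU : (rot p.1 p.2).card = b := by rw [rot_card]; exact hc
      have hU' : (rot p'.1 p'.2).card = b := by rw [rot_card]; exact hc'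
      have harg : ∀ j ≤ n, ht b (rot p.1 p.2) p.1.val ≤ ht b (rot p.1 p.2) j := by
        have h1 : Dyck b (rot (-p.1) (rot p.1 p.2)) := by rw [rot_neg_rot]; exact hd
        have h2 := (dyck_rot_iff _ hU (-p.1)).mp h1
        intro j hj
        have h3 := h2 j hj
        rw [← ht_mod_top _ hU hn (Nat.sub_le n _), neg_val, mod_fix p.1.isLt] at h3
        exact h3
      have harg' : ∀ j ≤ n, ht b (rot p'.1 p'.2) p'.1.val ≤ ht b (rot p'.1 p'.2) j := by
        have h1 : Dyck b (rot (-p'.1) (rot p'.1 p'.2)) := by rw [rot_neg_rot]; exact hd'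
        have h2 := (dyck_rot_iff _ hU' (-p'.1)).mp h1
        intro j hj
        have h3 := h2 j hj
        rw [← ht_mod_top _ hU' hn (Nat.sub_le n _), neg_val, mod_fix p'.1.isLt] at h3
        exact h3
      rw [heq] at harg
      have heq1 : ht b (rot p'.1 p'.2) p.1.val = ht b (rot p'.1 p'.2) p'.1.val :=
        le_antisymm (harg _ (le_of_lt p'.1.isLt)) (harg' _ (le_of_lt p.1.isLt))
      have hval : p.1.val = p'.1.val := ht_inj hco _ p.1.isLt p'.1.isLt heq1
      have hfst : p.1 = p'.1 := Fin.ext hval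
      have hsnd : p.2 = p'.2 := by
        have e1 : rot (-p.1) (rot p.1 p.2) = p.2 := rot_neg_rot _ _
        have e2 : rot (-p'.1) (rot p'.1 p'.2) = p'.2 := rot_neg_rot _ _
        rw [← e1, ← e2, heq, hfst]
      exact Prod.ext hfst hsnd
    · intro U hU
      rw [Finset.mem_powersetCard_univ] at hU
      obtain ⟨m, hm_mem, hmin⟩ :=
        Finset.exists_min_image (range n) (fun i => ht b U i) ⟨0, Finset.mem_range.mpr hn⟩
      rw [Finset.mem_range] at hm_mem
      have hmin' : ∀ j ≤ n, ht b U m ≤ ht b U j := by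
        intro j hj
        rcases lt_or_eq_of_le hj with h | rfl
        · exact hmin j (Finset.mem_range.mpr h)
        · rw [ht_top U hU]
          have := hmin 0 (Finset.mem_range.mpr hn)
          rw [ht_zero] at this
          exact this
      set τ : Fin n := ⟨(n - m) % n, Nat.mod_lt _ hn⟩ with hτ
      have hTd : Dyck b (rot τ U) := by
        rw [dyck_rot_iff U hU τ]
        intro j hj
        have e : ht b U (n - τ.val) = ht b U m := by
          rw [← ht_mod_top U hU hn (Nat.sub_le n _)]
          congr 1
          exact mod_fix hm_mem
        rw [e]
        exact hmin' j hj
      refine ⟨(-τ, rot τ U), ?_, ?_⟩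
      · rw [Finset.mem_product]
        refine ⟨Finset.mem_univ _, ?_⟩
        rw [hD, Finset.mem_filter, Finset.mem_powersetCard_univ, rot_card]
        exact ⟨hU, hTd⟩
      · rw [rot_neg_rot]
  rw [← hbij, Finset.card_product, Finset.card_univ, Fintype.card_fin]

lemma card_filter_val_lt (b c : ℕ) (hc : c ≤ b) :
    ((univ : Finset (Fin b)).filter (fun j => j.val < c)).card = c := by
  have himg : ((univ : Finset (Fin b)).filter (fun j => j.val < c)).image Fin.val
      = Finset.range c := by
    ext x
    simp only [Finset.mem_image, Finset.mem_filter, Finset.mem_univ, true_and, Finset.mem_range]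
    constructor
    · rintro ⟨j, hj, rfl⟩; exact hj
    · intro hx; exact ⟨⟨x, lt_of_lt_of_le hx hc⟩, hx, rfl⟩
  have h2 := Finset.card_image_of_injective
    ((univ : Finset (Fin b)).filter (fun j => j.val < c)) (Fin.val_injective)
  rw [himg, Finset.card_range] at h2
  omega

lemma card_filter_val_ge (b c : ℕ) (hc : c ≤ b) :
    ((univ : Finset (Fin b)).filter (fun j => c ≤ j.val)).card = b - c := by
  have h := Finset.card_filter_add_card_filter_not
    (s := (univ : Finset (Fin b))) (p := fun j => j.val < c)
  rw [card_filter_val_lt b c hc, Finset.card_univ, Fintype.card_fin] at h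
  have he : ((univ : Finset (Fin b)).filter (fun j => ¬ j.val < c))
      = (univ : Finset (Fin b)).filter (fun j => c ≤ j.val) := by
    apply Finset.filter_congr
    intro x _
    simp [not_lt]
  rw [he] at h
  omega

lemma strictMono_val_gap {b n : ℕ} (f : Fin b → Fin n) (hf : StrictMono f)
    (k k' : Fin b) (h : k.val ≤ k'.val) : (f k).val + (k'.val - k.val) ≤ (f k').val := by
  classical
  set g : ℕ → ℕ := fun m => if h : m < b then (f ⟨m, h⟩).val else m with hg_def
  have hg : ∀ (k : Fin b), g k.val = (f k).val := by
    intro k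
    simp only [hg_def]
    rw [dif_pos k.isLt]
  have hstep : ∀ m, m + 1 < b → g m < g (m + 1) := by
    intro m hm
    simp only [hg_def]
    rw [dif_pos (show m < b by omega), dif_pos hm]
    exact hf (Fin.mk_lt_mk.mpr (Nat.lt_succ_self m))
  have hgap : ∀ d m, m + d < b → g m + d ≤ g (m + d) := by
    intro d
    induction d with
    | zero => intro m hm; simp
    | succ d ih =>
      intro m hm
      have h1 := ih m (by omega)
      have h2 := hstep (m + d) (by omega)
      have e : m + (d + 1) = m + d + 1 := rfl
      rw [e]
      omega
  have h3 := hgap (k'.val - k.val) k.val (by have := k'.isLt; omega)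
  have e2 : k.val + (k'.val - k.val) = k'.val := by omega
  rw [e2, hg, hg] at h3
  exact h3

lemma orderEmb_image {α : Type*} [LinearOrder α] [DecidableEq α] (s : Finset α) {k : ℕ} (h : s.card = k) :
    (univ : Finset (Fin k)).image (s.orderEmbOfFin h) = s := by
  apply Finset.eq_of_subset_of_card_le
  · intro x hx
    rw [Finset.mem_image] at hx
    obtain ⟨j, _, rfl⟩ := hx
    exact Finset.orderEmbOfFin_mem s h j
  · rw [Finset.card_image_of_injective _ (s.orderEmbOfFin h).injective, Finset.card_univ,
      Fintype.card_fin, h]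

def FF (a b : ℕ) (μ : Fin b → Fin (a + 1)) (j : Fin b) : Fin (a + b) :=
  ⟨(μ j).val + (b - 1 - j.val), by have h1 := (μ j).isLt; have h2 := j.isLt; omega⟩

lemma FF_val (a b : ℕ) (μ : Fin b → Fin (a + 1)) (j : Fin b) :
    (FF a b μ j).val = (μ j).val + (b - 1 - j.val) := rfl

lemma mu_card (a b : ℕ) (hb : 0 < b) :
    ((univ : Finset (Fin b → Fin (a+1))).filter (fun μ =>
        (∀ i j : Fin b, i ≤ j → μ j ≤ μ i) ∧
        ∀ k : Fin b, (μ k : ℕ) ≤ a * (b - ((k : ℕ) + 1)) / b)).card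
    = ((powersetCard b (univ : Finset (Fin (a+b)))).filter (fun T => Dyck b T)).card := by
  classical
  have hanti : ∀ (μ : Fin b → Fin (a+1)), (∀ i j : Fin b, i ≤ j → μ j ≤ μ i) →
      ∀ (j j' : Fin b), j < j' → (FF a b μ j').val < (FF a b μ j).val := by
    intro μ hA j j' hjj
    have h1 : (μ j').val ≤ (μ j).val := hA j j' (le_of_lt hjj)
    have h2 : j.val < j'.val := hjj
    have h3 := j'.isLt
    rw [FF_val, FF_val]
    omega
  have hinj : ∀ (μ : Fin b → Fin (a+1)), (∀ i j : Fin b, i ≤ j → μ j ≤ μ i) →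
      Function.Injective (FF a b μ) := by
    intro μ hA j j' he
    have hv : (FF a b μ j).val = (FF a b μ j').val := congrArg Fin.val he
    rcases lt_trichotomy j j' with h | h | h
    · have := hanti μ hA j j' h; omega
    · exact h
    · have := hanti μ hA j' j h; omega
  have hcardim : ∀ (μ : Fin b → Fin (a+1)), (∀ i j : Fin b, i ≤ j → μ j ≤ μ i) →
      ((univ : Finset (Fin b)).image (FF a b μ)).card = b := by
    intro μ hA
    rw [Finset.card_image_of_injective _ (hinj μ hA), Finset.card_univ, Fintype.card_fin]
  apply Finset.card_bij (fun μ _ => (univ : Finset (Fin b)).image (FF a b μ))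
  · -- maps to D
    intro μ hμ
    rw [Finset.mem_filter] at hμ
    obtain ⟨-, hA, hB⟩ := hμ
    rw [Finset.mem_filter, Finset.mem_powersetCard_univ]
    refine ⟨hcardim μ hA, ?_⟩
    intro i hi
    unfold ht
    have hcnt : cnt ((univ : Finset (Fin b)).image (FF a b μ)) i
        = ((univ : Finset (Fin b)).filter (fun j => (FF a b μ j).val < i)).card := by
      unfold cnt
      rw [Finset.filter_image, Finset.card_image_of_injective _ (hinj μ hA)]
    rw [hcnt]
    set k := ((univ : Finset (Fin b)).filter (fun j => (FF a b μ j).val < i)).card with hk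
    have hkb : k ≤ b := by
      have := Finset.card_filter_le (univ : Finset (Fin b)) (fun j => (FF a b μ j).val < i)
      rw [Finset.card_univ, Fintype.card_fin] at this
      exact this
    have hclaim : b * i ≤ (a + b) * k := by
      rcases eq_or_lt_of_le hkb with he | hlt
      · calc b * i ≤ b * (a + b) := Nat.mul_le_mul_left _ hi
          _ = (a + b) * b := mul_comm _ _
          _ = (a + b) * k := by rw [he]
      · set j0 : Fin b := ⟨b - 1 - k, by omega⟩ with hj0
        have hj0v : j0.val = b - 1 - k := rfl
        have hge : i ≤ (FF a b μ j0).val := by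
          by_contra hlt2
          push_neg at hlt2
          have hsub : (univ : Finset (Fin b)).filter (fun j => b - 1 - k ≤ j.val)
              ⊆ (univ : Finset (Fin b)).filter (fun j => (FF a b μ j).val < i) := by
            intro x hx
            rw [Finset.mem_filter] at hx ⊢
            refine ⟨Finset.mem_univ _, ?_⟩
            have hxv : j0.val ≤ x.val := hx.2
            have h1 : (μ x).val ≤ (μ j0).val := hA j0 x (by rw [Fin.le_def]; exact hxv)
            have h2 := x.isLt
            have h3 := FF_val a b μ j0
            rw [FF_val]
            omega
          have hcard := Finset.card_le_card hsub
          rw [card_filter_val_ge b (b - 1 - k) (by omega)] at hcard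
          omega
        have hB0 := hB j0
        have he2 : b - (j0.val + 1) = k := by omega
        rw [he2] at hB0
        have hdiv : (a * k / b) * b ≤ a * k := Nat.div_mul_le_self _ _
        have hFv := FF_val a b μ j0
        have h5 : i ≤ a * k / b + k := by omega
        calc b * i ≤ b * (a * k / b + k) := Nat.mul_le_mul_left _ h5
          _ = (a * k / b) * b + b * k := by ring
          _ ≤ a * k + b * k := Nat.add_le_add_right hdiv _
          _ = (a + b) * k := by ring
    have hz : (b : ℤ) * (i : ℤ) ≤ ((a + b : ℕ) : ℤ) * (k : ℤ) := by exact_mod_cast hclaim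
    push_cast at hz ⊢
    linarith
  · -- injective
    intro μ hμ μ' hμ' he
    rw [Finset.mem_filter] at hμ hμ'
    obtain ⟨-, hA, hB⟩ := hμ
    obtain ⟨-, hA', hB'⟩ := hμ'
    have hrevmono : ∀ (ν : Fin b → Fin (a+1)), (∀ i j : Fin b, i ≤ j → ν j ≤ ν i) →
        StrictMono (fun j : Fin b => FF a b ν (Fin.rev j)) := by
      intro ν hAν j j' hjj
      have h1 : Fin.rev j' < Fin.rev j := Fin.rev_lt_rev.mpr hjj
      have h2 := hanti ν hAν _ _ h1
      exact h2
    have hcard := hcardim μ hA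
    have hu1 := Finset.orderEmbOfFin_unique hcard
      (f := fun j : Fin b => FF a b μ (Fin.rev j))
      (fun x => Finset.mem_image_of_mem _ (Finset.mem_univ _)) (hrevmono μ hA)
    have hu2 := Finset.orderEmbOfFin_unique hcard
      (f := fun j : Fin b => FF a b μ' (Fin.rev j))
      (fun x => by rw [he]; exact Finset.mem_image_of_mem _ (Finset.mem_univ _)) (hrevmono μ' hA')
    funext j
    have h5 : FF a b μ (Fin.rev (Fin.rev j)) = FF a b μ' (Fin.rev (Fin.rev j)) :=
      congrFun (hu1.trans hu2.symm) (Fin.rev j)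
    rw [Fin.rev_rev] at h5
    have hv : (FF a b μ j).val = (FF a b μ' j).val := congrArg Fin.val h5
    rw [FF_val, FF_val] at hv
    apply Fin.ext
    omega
  · -- surjective
    intro T hT
    rw [Finset.mem_filter, Finset.mem_powersetCard_univ] at hT
    obtain ⟨hc, hd⟩ := hT
    set e := T.orderEmbOfFin hc with hedef
    have hmono : StrictMono e := (T.orderEmbOfFin hc).strictMono
    have himg : (univ : Finset (Fin b)).image e = T := orderEmb_image T hc
    have hcntk : ∀ k : Fin b, cnt T (e k).val = k.val := by
      intro k
      unfold cnt
      rw [← himg, Finset.filter_image,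
        Finset.card_image_of_injective _ (T.orderEmbOfFin hc).injective]
      have hiff : ∀ j : Fin b, ((e j).val < (e k).val ↔ j.val < k.val) := by
        intro j
        rw [← Fin.lt_def, ← Fin.lt_def]
        exact hmono.lt_iff_lt
      rw [Finset.filter_congr (fun x _ => hiff x)]
      exact card_filter_val_lt b k.val (le_of_lt k.isLt)
    have hDk : ∀ k : Fin b, b * (e k).val ≤ (a + b) * k.val := by
      intro k
      have h1 := hd (e k).val (le_of_lt (e k).isLt)
      unfold ht at h1
      rw [hcntk k] at h1
      have h2 : (b : ℤ) * ((e k).val : ℤ) ≤ ((a + b : ℕ) : ℤ) * (k.val : ℤ) := by linarith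
      exact_mod_cast h2
    have hge : ∀ k : Fin b, k.val ≤ (e k).val := by
      intro k
      have h0 := strictMono_val_gap e hmono ⟨0, hb⟩ k (Nat.zero_le _)
      have hz : ((⟨0, hb⟩ : Fin b) : ℕ) = 0 := rfl
      omega
    have hbound : ∀ k : Fin b, (e k).val - k.val ≤ a * k.val / b := by
      intro k
      rw [Nat.le_div_iff_mul_le hb]
      rw [Nat.sub_mul, tsub_le_iff_right]
      calc (e k).val * b = b * (e k).val := mul_comm _ _
        _ ≤ (a + b) * k.val := hDk k
        _ = a * k.val + k.val * b := by ring
    have hmu_lt : ∀ k : Fin b, (e k).val - k.val < a + 1 := by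
      intro k
      have h1 := hbound k
      have h2 : a * k.val / b ≤ a := by
        have h3 : a * k.val ≤ b * a := by
          calc a * k.val ≤ a * b := Nat.mul_le_mul_left a (le_of_lt k.isLt)
            _ = b * a := mul_comm _ _
        exact Nat.div_le_of_le_mul h3
      omega
    refine ⟨fun j => ⟨(e (Fin.rev j)).val - (Fin.rev j).val, hmu_lt _⟩, ?_, ?_⟩
    · rw [Finset.mem_filter]
      refine ⟨Finset.mem_univ _, ?_, ?_⟩
      · intro i j hij
        rw [Fin.le_def]
        show (e (Fin.rev j)).val - (Fin.rev j).val ≤ (e (Fin.rev i)).val - (Fin.rev i).val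
        have hrev : (Fin.rev j).val ≤ (Fin.rev i).val := Fin.rev_le_rev.mpr hij
        have hg := strictMono_val_gap e hmono (Fin.rev j) (Fin.rev i) hrev
        omega
      · intro k
        show (e (Fin.rev k)).val - (Fin.rev k).val ≤ a * (b - (k.val + 1)) / b
        have h1 := hbound (Fin.rev k)
        have h2 : (Fin.rev k).val = b - (k.val + 1) := Fin.val_rev k
        rw [h2] at h1
        exact h1
    · rw [← himg]
      have hFμ : ∀ j : Fin b,
          FF a b (fun j => ⟨(e (Fin.rev j)).val - (Fin.rev j).val, hmu_lt _⟩) j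
            = e (Fin.rev j) := by
        intro j
        apply Fin.ext
        rw [FF_val]
        show ((e (Fin.rev j)).val - (Fin.rev j).val) + (b - 1 - j.val) = (e (Fin.rev j)).val
        have h2 : (Fin.rev j).val = b - (j.val + 1) := Fin.val_rev j
        have h3 := hge (Fin.rev j)
        have h4 := j.isLt
        omega
      ext x
      simp only [Finset.mem_image, Finset.mem_univ, true_and]
      constructor
      · rintro ⟨j, rfl⟩
        exact ⟨Fin.rev j, (hFμ j).symm⟩
      · rintro ⟨j, rfl⟩
        refine ⟨Fin.rev j, ?_⟩
        rw [hFμ (Fin.rev j), Fin.rev_rev]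

end RC

open Finset

/-- For coprime positive integers `a` and `b`, the number of `(a,b)`-Dyck paths,
i.e. partitions `μ` with `μ_k ≤ ⌊a(b-k)/b⌋` for `1 ≤ k ≤ b` (encoded as antitone
functions `Fin b → Fin (a+1)` with `μ k ≤ ⌊a·(b-(k+1))/b⌋`), equals
`(1/(a+b))·binom(a+b, a)`. -/
theorem rational_catalan (a b : ℕ) (ha : 0 < a) (hb : 0 < b) (hab : Nat.Coprime a b) :
    (a + b) * (Finset.univ.filter (fun μ : Fin b → Fin (a + 1) =>
        (∀ i j : Fin b, i ≤ j → μ j ≤ μ i) ∧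
        ∀ k : Fin b, (μ k : ℕ) ≤ a * (b - ((k : ℕ) + 1)) / b)).card
      = Nat.choose (a + b) a := by
  have hco : Nat.Coprime b (a + b) := Nat.coprime_add_self_right.mpr hab.symm
  rw [RC.mu_card a b hb, ← RC.key_count (by omega) hco, Finset.card_powersetCard,
    Finset.card_univ, Fintype.card_fin]
  have h1 := Nat.choose_symm (Nat.le_add_right a b)
  have h2 : a + b - a = b := by omega
  rw [h2] at h1
  exact h1
end

section
/- For coprime positive integers a and b, the number of (a,b)-parking functions equals a^{b-1}. -/
open Finset

namespace ParkAux

variable {a b : ℕ}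

def M (b : ℕ) (f : Fin b → ℕ) (t : ℕ) : ℕ := (univ.filter fun i => b * f i ≤ t).card

def kap (a b : ℕ) (f : Fin b → ℕ) (t : ℕ) : ℤ := (a : ℤ) * M b f t - t

def Park (a b : ℕ) (g : Fin b → ℕ) : Prop :=
  ∀ j < b, j + 1 ≤ (univ.filter fun i => b * g i ≤ a * j).card

instance (a b : ℕ) (g : Fin b → ℕ) : Decidable (Park a b g) := by
  unfold Park; infer_instance

lemma card_le_of_imp {p q : Fin b → Prop} [DecidablePred p] [DecidablePred q]
    (h : ∀ i, p i → q i) : (univ.filter p).card ≤ (univ.filter q).card := by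
  apply card_le_card
  intro i hi
  simp only [mem_filter, mem_univ, true_and] at *
  exact h i hi

lemma M_mono (f : Fin b → ℕ) {s t : ℕ} (h : s ≤ t) : M b f s ≤ M b f t :=
  card_le_of_imp (fun i hi => hi.trans h)

lemma park_iff_all (ha : 0 < a) (g : Fin b → ℕ) :
    Park a b g ↔ ∀ s < a * b, s + 1 ≤ a * (univ.filter fun i => b * g i ≤ s).card := by
  constructor
  · intro hp s hs
    have hj : s / a < b := Nat.div_lt_of_lt_mul (by omega)
    have h1 := hp (s / a) hj
    have h2 : (univ.filter fun i => b * g i ≤ a * (s/a)).card ≤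
        (univ.filter fun i => b * g i ≤ s).card :=
      card_le_of_imp (fun i hi => hi.trans (by rw [mul_comm]; exact Nat.div_mul_le_self s a))
    have h3 : a * (s / a + 1) ≤ a * (univ.filter fun i => b * g i ≤ s).card :=
      Nat.mul_le_mul_left a (h1.trans h2)
    have h4 := Nat.div_add_mod s a
    have h5 : s % a < a := Nat.mod_lt _ ha
    nlinarith [h3, h4, h5]
  · intro hp j hj
    have hs : a * j < a * b := by
      exact Nat.mul_lt_mul_of_le_of_lt (le_refl a) hj ha
    have h1 := hp (a * j) hs
    by_contra hcon
    push_neg at hcon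
    have : a * (univ.filter fun i => b * g i ≤ a * j).card ≤ a * j :=
      Nat.mul_le_mul_left a (by omega)
    omega


/-- abstract per-element bookkeeping -/
lemma ifstep (ab s r D sc u q qc : ℕ)
    (h1 : D + r = ab) (h2 : 0 < D) (h3 : sc + 1 = D) (h4 : s < ab)
    (hcase : (qc = q + r ∧ q + r < ab) ∨ (q + r = ab + qc ∧ qc ≤ r ∧ sc < q))
    (huc : (r ≤ s ∧ u = s - r) ∨ (s < r ∧ u + r = s + ab)) :
    ((if qc ≤ s then 1 else 0) + (if q ≤ sc then 1 else 0) : ℕ) =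
      if r ≤ s then (if q ≤ u then 1 else 0) + 1 else (if q ≤ u then 1 else 0) := by
  split_ifs <;> omega

lemma pointwise (ha : 0 < a) (hb : 0 < b) (f : Fin b → ℕ) (hf : ∀ i, f i < a)
    (c : ℕ) (hc : c < a) (s : ℕ) (hs : s < a * b) :
    (s + 1 ≤ a * (univ.filter fun i => b * ((f i + c) % a) ≤ s).card) ↔
      kap a b f (b * (a - c) - 1) ≤ kap a b f ((s + b * (a - c)) % (a * b)) := by
  have hab : 0 < a * b := Nat.mul_pos ha hb
  have hba : b * a = a * b := Nat.mul_comm b a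
  have hDr : b * (a - c) + b * c = a * b := by
    rw [← Nat.mul_add, Nat.sub_add_cancel hc.le, hba]
  have hDpos : 0 < b * (a - c) := Nat.mul_pos hb (by omega)
  have hsc : (b * (a - c) - 1) + 1 = b * (a - c) := Nat.succ_pred_eq_of_pos hDpos
  have huc : (b * c ≤ s ∧ (s + b * (a - c)) % (a * b) = s - b * c) ∨
      (s < b * c ∧ (s + b * (a - c)) % (a * b) + b * c = s + a * b) := by
    by_cases hsr : b * c ≤ s
    · left
      refine ⟨hsr, ?_⟩
      have h1 : s + b * (a - c) = (s - b * c) + a * b := by omega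
      rw [h1, Nat.add_mod_right]
      exact Nat.mod_eq_of_lt (by omega)
    · right
      refine ⟨by omega, ?_⟩
      have h1 : (s + b * (a - c)) % (a * b) = s + b * (a - c) :=
        Nat.mod_eq_of_lt (by omega)
      omega
  have hkey : ∀ i : Fin b,
      ((if b * ((f i + c) % a) ≤ s then 1 else 0) + (if b * f i ≤ b * (a - c) - 1 then 1 else 0) : ℕ) =
      if b * c ≤ s then (if b * f i ≤ (s + b * (a - c)) % (a * b) then 1 else 0) + 1
        else (if b * f i ≤ (s + b * (a - c)) % (a * b) then 1 else 0) := by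
    intro i
    have hfi := hf i
    apply ifstep (a * b) s (b * c) (b * (a - c)) _ _ (b * f i) _ hDr hDpos hsc hs _ huc
    have hq : b * (f i + c) = b * f i + b * c := Nat.mul_add b _ c
    have hqb : b * f i + b ≤ a * b := by
      have h1 : b * (f i + 1) ≤ b * a := Nat.mul_le_mul_left b (by omega)
      have h2 : b * (f i + 1) = b * f i + b := by rw [Nat.mul_add]; omega
      omega
    by_cases hia : f i + c < a
    · left
      rw [Nat.mod_eq_of_lt hia]
      have h2 : b * (f i + c) + b ≤ a * b := by
        have h3 : b * (f i + c + 1) ≤ b * a := Nat.mul_le_mul_left b (by omega)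
        have h4 : b * (f i + c + 1) = b * (f i + c) + b := by rw [Nat.mul_add]; omega
        omega
      exact ⟨hq, by omega⟩
    · right
      push_neg at hia
      have hlt : f i + c - a < a := by omega
      have he : f i + c = a + (f i + c - a) := by omega
      have hmod : (f i + c) % a = f i + c - a := by
        conv_lhs => rw [he]
        rw [Nat.add_mod_left]
        exact Nat.mod_eq_of_lt hlt
      rw [hmod]
      have h3 : b * f i + b * c = a * b + b * (f i + c - a) := by
        calc b * f i + b * c = b * (f i + c) := hq.symm
          _ = b * (a + (f i + c - a)) := by rw [show a + (f i + c - a) = f i + c by omega]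
          _ = b * a + b * (f i + c - a) := Nat.mul_add b a _
          _ = a * b + b * (f i + c - a) := by rw [hba]
      refine ⟨by omega, by omega, by omega⟩
  -- sum the per-element identity
  have hsum : (univ.filter fun i => b * ((f i + c) % a) ≤ s).card + M b f (b * (a - c) - 1) =
      (if b * c ≤ s then M b f ((s + b * (a - c)) % (a * b)) + b
        else M b f ((s + b * (a - c)) % (a * b))) := by
    rw [M, M, card_filter, card_filter, card_filter, ← Finset.sum_add_distrib]
    rw [Finset.sum_congr rfl (fun i _ => hkey i)]
    split_ifs with h
    · rw [Finset.sum_add_distrib]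
      simp [Finset.card_univ]
    · rfl
  -- now pure integer arithmetic
  set N := (univ.filter fun i => b * ((f i + c) % a) ≤ s).card with hN
  set Msc := M b f (b * (a - c) - 1) with hMsc
  set Mu := M b f ((s + b * (a - c)) % (a * b)) with hMu
  have hcast : ((b * (a - c) - 1 : ℕ) : ℤ) = (b * (a - c) : ℕ) - 1 := by
    push_cast [Nat.cast_sub (show 1 ≤ b * (a - c) from hDpos)]
    ring
  have hDrz : ((b * (a - c) : ℕ) : ℤ) + ((b * c : ℕ) : ℤ) = ((a * b : ℕ) : ℤ) := by
    exact_mod_cast hDr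
  unfold kap
  rw [← hMsc, ← hMu, hcast]
  rcases huc with ⟨hsr, hu⟩ | ⟨hsr, hu⟩
  · rw [if_pos hsr] at hsum
    have h1 : (N : ℤ) + Msc = Mu + b := by exact_mod_cast hsum
    have h3 : (a : ℤ) * N = a * Mu + a * b - a * Msc := by linear_combination (a : ℤ) * h1
    have huz : ((s + b * (a - c)) % (a * b) : ℕ) + (b * c : ℕ) = s := by omega
    have huz' : (((s + b * (a - c)) % (a * b) : ℕ) : ℤ) + ((b * c : ℕ) : ℤ) = (s : ℤ) := by
      exact_mod_cast huz
    constructor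
    · intro h
      have h' : (s : ℤ) + 1 ≤ (a : ℤ) * N := by exact_mod_cast h
      push_cast at h' h3 huz' hDrz ⊢
      linarith
    · intro h
      zify
      push_cast at h h3 huz' hDrz ⊢
      linarith
  · rw [if_neg (by omega : ¬ b * c ≤ s)] at hsum
    have h1 : (N : ℤ) + Msc = Mu := by exact_mod_cast hsum
    have h3 : (a : ℤ) * N = a * Mu - a * Msc := by linear_combination (a : ℤ) * h1
    have huz' : (((s + b * (a - c)) % (a * b) : ℕ) : ℤ) + ((b * c : ℕ) : ℤ)
        = (s : ℤ) + ((a * b : ℕ) : ℤ) := by exact_mod_cast hu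
    constructor
    · intro h
      have h' : (s : ℤ) + 1 ≤ (a : ℤ) * N := by exact_mod_cast h
      push_cast at h' h3 huz' hDrz ⊢
      linarith
    · intro h
      zify
      push_cast at h h3 huz' hDrz ⊢
      linarith

lemma park_shift_iff (ha : 0 < a) (hb : 0 < b) (f : Fin b → ℕ) (hf : ∀ i, f i < a)
    (c : ℕ) (hc : c < a) :
    Park a b (fun i => (f i + c) % a) ↔
      ∀ t < a * b, kap a b f (b * (a - c) - 1) ≤ kap a b f t := by
  have hab : 0 < a * b := Nat.mul_pos ha hb
  have hDr : b * (a - c) + b * c = a * b := by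
    rw [← Nat.mul_add, Nat.sub_add_cancel hc.le, Nat.mul_comm]
  rw [park_iff_all ha]
  constructor
  · intro h t ht
    have hslt : (t + b * c) % (a * b) < a * b := Nat.mod_lt _ hab
    have hu : ((t + b * c) % (a * b) + b * (a - c)) % (a * b) = t := by
      rw [Nat.mod_add_mod]
      have h1 : t + b * c + b * (a - c) = t + a * b := by omega
      rw [h1, Nat.add_mod_right]
      exact Nat.mod_eq_of_lt ht
    have := (pointwise ha hb f hf c hc _ hslt).mp (h _ hslt)
    rwa [hu] at this
  · intro h s hslt
    exact (pointwise ha hb f hf c hc s hslt).mpr (h _ (Nat.mod_lt _ hab))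

lemma kap_eq_imp_dvd (f : Fin b → ℕ) {s t : ℕ} (h : kap a b f s = kap a b f t) :
    (a : ℤ) ∣ (s : ℤ) - t := by
  unfold kap at h
  exact ⟨(M b f s : ℤ) - M b f t, by linarith⟩

lemma exists_unique_shift (ha : 0 < a) (hb : 0 < b) (hab : Nat.Coprime a b)
    (f : Fin b → ℕ) (hf : ∀ i, f i < a) :
    ∃! c : ℕ, c < a ∧ Park a b (fun i => (f i + c) % a) := by
  have habp : 0 < a * b := Nat.mul_pos ha hb
  -- find an argmin of kap on range (a*b)
  obtain ⟨s₀, hs₀mem, hs₀min⟩ :=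
    (Finset.range (a * b)).exists_min_image (fun t => kap a b f t)
      ⟨0, Finset.mem_range.mpr habp⟩
  rw [Finset.mem_range] at hs₀mem
  have hs₀min' : ∀ t < a * b, kap a b f s₀ ≤ kap a b f t := fun t ht =>
    hs₀min t (Finset.mem_range.mpr ht)
  -- b divides s₀ + 1
  have hdvd : b ∣ s₀ + 1 := by
    rcases Nat.lt_or_ge (s₀ + 1) (a * b) with hlt | hge
    · have h1 := hs₀min' (s₀ + 1) hlt
      unfold kap at h1
      have h2 : M b f s₀ < M b f (s₀ + 1) := by
        by_contra hcon
        push_neg at hcon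
        have h5 : (M b f (s₀+1) : ℤ) ≤ (M b f s₀ : ℤ) := by exact_mod_cast hcon
        have haz : (0:ℤ) ≤ a := by positivity
        have h6 : (a:ℤ) * (M b f (s₀+1)) ≤ (a:ℤ) * (M b f s₀) :=
          mul_le_mul_of_nonneg_left h5 haz
        push_cast at h1
        linarith
      -- get a witness i with b * f i = s₀ + 1
      by_contra hcon
      have heq : M b f (s₀ + 1) = M b f s₀ := by
        unfold M
        congr 1
        apply Finset.filter_congr
        intro i _
        constructor
        · intro hi
          rcases Nat.lt_or_ge (b * f i) (s₀ + 1) with h | h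
          · omega
          · exact absurd ⟨f i, by omega⟩ hcon
        · intro hi; omega
      omega
    · have h7 : s₀ + 1 = a * b := by omega
      rw [h7, Nat.mul_comm]
      exact Dvd.intro a rfl
  obtain ⟨m, hm⟩ := hdvd
  have hm1 : 1 ≤ m := by
    rcases Nat.eq_zero_or_pos m with h | h
    · rw [h, Nat.mul_zero] at hm; omega
    · exact h
  have hma : m ≤ a := by
    by_contra hcon
    push_neg at hcon
    have h8 : b * (a + 1) ≤ b * m := Nat.mul_le_mul_left b hcon
    have h9 : b * (a + 1) = b * a + b := by rw [Nat.mul_add]; omega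
    have hba : b * a = a * b := Nat.mul_comm b a
    omega
  refine ⟨a - m, ⟨by omega, ?_⟩, ?_⟩
  · rw [park_shift_iff ha hb f hf _ (by omega)]
    have h1 : b * (a - (a - m)) - 1 = s₀ := by
      rw [Nat.sub_sub_self hma]
      omega
    rw [h1]
    exact hs₀min'
  · rintro c ⟨hc, hpark⟩
    rw [park_shift_iff ha hb f hf c hc] at hpark
    have h1 : b * (a - (a - m)) - 1 = s₀ := by
      rw [Nat.sub_sub_self hma]
      omega
    have hp2 : Park a b (fun i => (f i + (a - m)) % a) := by
      rw [park_shift_iff ha hb f hf _ (by omega), h1]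
      exact hs₀min'
    -- both are argmins: kap values equal
    have hlt1 : b * (a - c) - 1 < a * b := by
      have h10 : b * (a - c) ≤ b * a := Nat.mul_le_mul_left b (by omega)
      have hba : b * a = a * b := Nat.mul_comm b a
      omega
    have hlt2 : s₀ < a * b := hs₀mem
    have he1 : kap a b f (b * (a - c) - 1) ≤ kap a b f s₀ := hpark s₀ hlt2
    have he2 : kap a b f s₀ ≤ kap a b f (b * (a - c) - 1) := hs₀min' _ hlt1
    have heq : kap a b f (b * (a - c) - 1) = kap a b f s₀ := le_antisymm he1 he2
    have hdv := kap_eq_imp_dvd f heq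
    -- s₀ = b*m - 1, b*(a-c)-1 - s₀ = b*(m' - m) with m' = a - c
    have hbc : 1 ≤ b * (a - c) := Nat.mul_pos hb (by omega)
    have hcast : ((b * (a - c) - 1 : ℕ) : ℤ) - (s₀ : ℤ) = (b : ℤ) * ((a - c : ℕ) - (m : ℕ)) := by
      have h2 : ((b * (a - c) - 1 : ℕ) : ℤ) = (b : ℤ) * ((a - c : ℕ) : ℤ) - 1 := by
        push_cast [Nat.cast_sub hbc]
        ring
      have h3 : (s₀ : ℤ) + 1 = (b : ℤ) * (m : ℤ) := by exact_mod_cast hm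
      rw [h2]
      linear_combination -h3
    rw [hcast] at hdv
    have hcop : IsCoprime (a : ℤ) (b : ℤ) := by
      rw [Nat.isCoprime_iff_coprime]; exact hab
    have hdv2 : (a : ℤ) ∣ ((a - c : ℕ) : ℤ) - (m : ℤ) := hcop.dvd_of_dvd_mul_left hdv
    -- conclude c = a - m
    have hac : ((a - c : ℕ) : ℤ) = (a : ℤ) - c := by
      push_cast [Nat.cast_sub hc.le]; ring
    have hmz : (1:ℤ) ≤ (m:ℤ) := by exact_mod_cast hm1
    have hmaz : (m:ℤ) ≤ (a:ℤ) := by exact_mod_cast hma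
    have hcz2 : (0:ℤ) ≤ (c:ℤ) := by positivity
    have hcz3 : (c:ℤ) < (a:ℤ) := by exact_mod_cast hc
    have haz : (0:ℤ) < (a:ℤ) := by exact_mod_cast ha
    have hzero : ((a - c : ℕ) : ℤ) - (m : ℤ) = 0 := by
      refine Int.eq_zero_of_abs_lt_dvd hdv2 ?_
      rw [hac, abs_lt]
      constructor <;> linarith
    rw [hac] at hzero
    omega

lemma exists_unique_shift_fin (ha : 0 < a) (hb : 0 < b) (hab : Nat.Coprime a b)
    (h : Fin b → Fin a) :
    ∃! d : Fin a, Park a b (fun i => ((h i + d : Fin a) : ℕ)) := by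
  obtain ⟨c, ⟨hc, hpark⟩, huniq⟩ :=
    exists_unique_shift ha hb hab (fun i => (h i : ℕ)) (fun i => (h i).isLt)
  refine ⟨⟨c, hc⟩, ?_, ?_⟩
  · show Park a b (fun i => ((h i + (⟨c, hc⟩ : Fin a) : Fin a) : ℕ))
    have he : (fun i => ((h i + (⟨c, hc⟩ : Fin a) : Fin a) : ℕ)) =
        (fun i => ((h i : ℕ) + c) % a) := by
      funext i
      rw [Fin.val_add]
    rw [he]
    exact hpark
  · intro d hd
    have hd' : Park a b (fun i => ((h i + d : Fin a) : ℕ)) := hd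
    have he : (fun i => ((h i + d : Fin a) : ℕ)) = (fun i => ((h i : ℕ) + (d : ℕ)) % a) := by
      funext i
      rw [Fin.val_add]
    rw [he] at hd'
    have := huniq (d : ℕ) ⟨d.isLt, hd'⟩
    exact Fin.ext this

lemma card_park_mul (ha : 0 < a) (hb : 0 < b) (hab : Nat.Coprime a b) :
    (univ.filter (fun f : Fin b → Fin a => Park a b (fun i => (f i : ℕ)))).card * a = a ^ b := by
  classical
  haveI : NeZero a := ⟨by omega⟩
  have key := exists_unique_shift_fin (a := a) (b := b) ha hb hab
  have hcard : ((univ.filter (fun f : Fin b → Fin a => Park a b (fun i => (f i : ℕ)))) ×ˢ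
      (univ : Finset (Fin a))).card = (univ : Finset (Fin b → Fin a)).card := by
    apply Finset.card_bij (fun p _ => fun j => p.1 j + p.2)
    · intro p hp
      exact mem_univ _
    · intro p1 hp1 p2 hp2 heq
      simp only [Finset.mem_product, Finset.mem_filter, Finset.mem_univ, true_and] at hp1 hp2
      obtain ⟨d, hd, huniq⟩ := key (fun j => p1.1 j + p1.2)
      have hn1 : -p1.2 = d := by
        apply huniq
        show Park a b (fun i => ((p1.1 i + p1.2 + -p1.2 : Fin a) : ℕ))
        have e1 : (fun i => ((p1.1 i + p1.2 + -p1.2 : Fin a) : ℕ)) =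
            (fun i => ((p1.1 i : Fin a) : ℕ)) := by
          funext i; congr 1; exact add_neg_cancel_right _ _
        rw [e1]
        exact hp1.1
      have hn2 : -p2.2 = d := by
        apply huniq
        show Park a b (fun i => ((p1.1 i + p1.2 + -p2.2 : Fin a) : ℕ))
        have e2 : (fun i => ((p1.1 i + p1.2 + -p2.2 : Fin a) : ℕ)) =
            (fun i => ((p2.1 i : Fin a) : ℕ)) := by
          funext i
          have hji : p1.1 i + p1.2 = p2.1 i + p2.2 := congrFun heq i
          rw [hji]; congr 1; exact add_neg_cancel_right _ _
        rw [e2]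
        exact hp2.1
      have hp12 : p1.2 = p2.2 := neg_injective (hn1.trans hn2.symm)
      have hfun : p1.1 = p2.1 := by
        funext j
        have hji : p1.1 j + p1.2 = p2.1 j + p2.2 := congrFun heq j
        rw [hp12] at hji
        exact add_right_cancel hji
      exact Prod.ext hfun hp12
    · intro h _
      obtain ⟨d, hd, _⟩ := key h
      refine ⟨(fun i => h i + d, -d), ?_, ?_⟩
      · simp only [Finset.mem_product, Finset.mem_filter, Finset.mem_univ, true_and]
        exact ⟨hd, trivial⟩
      · funext j
        show h j + d + -d = h j
        exact add_neg_cancel_right _ _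
  rw [Finset.card_product] at hcard
  rw [Finset.card_univ, Finset.card_univ, Fintype.card_fun, Fintype.card_fin, Fintype.card_fin]
    at hcard
  exact hcard

lemma stmt_iff (ha : 0 < a) (hb : 0 < b) (g : Fin b → ℕ) :
    (∀ k : Fin b, (univ.filter fun i => a * (b - ((k : ℕ) + 1)) / b < g i).card ≤ (k : ℕ)) ↔
      Park a b g := by
  have hcompl : ∀ j : ℕ, (univ.filter fun i : Fin b => a * j / b < g i).card +
      (univ.filter fun i : Fin b => b * g i ≤ a * j).card = b := by
    intro j
    have h1 := Finset.card_filter_add_card_filter_not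
      (s := (univ : Finset (Fin b))) (fun i => a * j / b < g i)
    have h2 : (univ.filter fun i : Fin b => ¬ a * j / b < g i) =
        (univ.filter fun i : Fin b => b * g i ≤ a * j) := by
      apply Finset.filter_congr
      intro i _
      rw [not_lt, Nat.le_div_iff_mul_le hb, Nat.mul_comm]
    rw [h2] at h1
    rw [h1, Finset.card_univ, Fintype.card_fin]
  constructor
  · intro h j hj
    have hk := h ⟨b - 1 - j, by omega⟩
    simp only at hk
    rw [show b - (b - 1 - j + 1) = j by omega] at hk
    have := hcompl j
    omega
  · intro h k
    have hj : b - ((k : ℕ) + 1) < b := by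
      have := k.isLt
      omega
    have hp := h _ hj
    have := hcompl (b - ((k : ℕ) + 1))
    have := k.isLt
    omega

end ParkAux

/-- For coprime positive integers `a` and `b`, the number of `(a,b)`-parking functions
equals `a^{b-1}`.  A parking function is encoded as a word `g : Fin b → ℕ` (with values
at most `a`, which is forced) whose weakly decreasing rearrangement is a partition
contained in the staircase `δ_{ab} = (⌊a(b-1)/b⌋, …, ⌊a/b⌋, 0)`: the `(k+1)`-st largest
value of `g` is at most `r_{k+1} = ⌊a(b-(k+1))/b⌋`, i.e. at most `k` of the values of
`g` exceed `r_{k+1}`.  Such words are in bijection with pairs of an `(a,b)`-Dyck path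
`μ` together with a standard filling of the vertical strip `(μ+1^b)/μ` increasing up
columns. -/
theorem parking_function_count (a b : ℕ) (ha : 0 < a) (hb : 0 < b)
    (hab : Nat.Coprime a b) :
    (Finset.univ.filter (fun g : Fin b → Fin (a + 1) =>
        ∀ k : Fin b,
          (Finset.univ.filter (fun i : Fin b =>
            a * (b - ((k : ℕ) + 1)) / b < (g i : ℕ))).card ≤ (k : ℕ))).card
      = a ^ (b - 1) := by
  classical
  have hsmall : ∀ g : Fin b → Fin (a + 1),
      (∀ k : Fin b, (Finset.univ.filter (fun i : Fin b =>
        a * (b - ((k : ℕ) + 1)) / b < (g i : ℕ))).card ≤ (k : ℕ)) →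
      ∀ i, (g i : ℕ) < a := by
    intro g hg i
    have h0 := hg ⟨0, hb⟩
    have h0' : (Finset.univ.filter (fun i : Fin b =>
        a * (b - 1) / b < (g i : ℕ))).card ≤ 0 := h0
    have hemp : (Finset.univ.filter (fun i : Fin b =>
        a * (b - 1) / b < (g i : ℕ))) = ∅ := Finset.card_eq_zero.mp (by omega)
    have hni : ¬ a * (b - 1) / b < (g i : ℕ) := by
      intro hcon
      have : i ∈ (Finset.univ.filter (fun i : Fin b =>
          a * (b - 1) / b < (g i : ℕ))) := Finset.mem_filter.mpr ⟨Finset.mem_univ _, hcon⟩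
      rw [hemp] at this
      exact absurd this (Finset.notMem_empty i)
    have hdiv : a * (b - 1) / b < a := by
      rw [Nat.div_lt_iff_lt_mul hb]
      have h1 : a * (b - 1) < a * b := Nat.mul_lt_mul_of_le_of_lt (le_refl a) (by omega) ha
      have h2 : (b - 1) * a = a * (b - 1) := Nat.mul_comm _ _
      omega
    omega
  have hcard : (Finset.univ.filter (fun g : Fin b → Fin (a + 1) =>
        ∀ k : Fin b,
          (Finset.univ.filter (fun i : Fin b =>
            a * (b - ((k : ℕ) + 1)) / b < (g i : ℕ))).card ≤ (k : ℕ))).card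
      = (Finset.univ.filter
          (fun f : Fin b → Fin a => ParkAux.Park a b (fun i => (f i : ℕ)))).card := by
    refine Finset.card_bij'
      (fun g hg => fun i => (⟨(g i : ℕ),
        hsmall g (Finset.mem_filter.mp hg).2 i⟩ : Fin a))
      (fun f _ => fun i => Fin.castLE (by omega : a ≤ a + 1) (f i))
      ?_ ?_ ?_ ?_
    · intro g hg
      rw [Finset.mem_filter]
      refine ⟨Finset.mem_univ _, ?_⟩
      have hP := (Finset.mem_filter.mp hg).2
      have := (ParkAux.stmt_iff ha hb (fun i => ((g i : ℕ)))).mp hP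
      exact this
    · intro f hf
      rw [Finset.mem_filter]
      refine ⟨Finset.mem_univ _, ?_⟩
      have hP := (Finset.mem_filter.mp hf).2
      exact (ParkAux.stmt_iff ha hb (fun i => ((f i : ℕ)))).mpr hP
    · intro g hg
      funext i
      apply Fin.ext
      rfl
    · intro f hf
      funext i
      apply Fin.ext
      rfl
  rw [hcard]
  have hmul := ParkAux.card_park_mul (a := a) (b := b) ha hb hab
  have hpow : a ^ b = a ^ (b - 1) * a := by
    rw [← pow_succ, Nat.sub_add_cancel hb]
  rw [hpow] at hmul
  exact Nat.eq_of_mul_eq_mul_right ha hmul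
end
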